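/- arXiv:1307.2689 — 12 statements merged into one kernel-verified Lean document; each statement's English description precedes it below -/
import Mathlib

section
/- The assignment S_i ↦ s_i extends to a group homomorphism π : Ŵ → W, and the kernel of π is exactly the subgroup of Ŵ generated by the elements S_i² (i ∈ I). -/
/-! The natural map `Ŵ → W` and its kernel. -/

namespace PaperAmalgams

variable {I : Type*}

/-- Alternating word `S_i S_j S_i ⋯` with `n` factors, in the free group on `I`. -/
def altWord (i j : I) : ℕ → FreeGroup I
  | 0 => 1
  | n + 1 => FreeGroup.of i * altWord j i n

/-- The edge labels of the Dynkin diagram: `m i j = 2, 3, 4, 6` according as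
`A i j * A j i = 0, 1, 2, 3`, and `∞` (encoded as `0`) if `A i j * A j i ≥ 4`.
(Intended to be used for `i ≠ j`.) -/
def mLabel (A : I → I → ℤ) (i j : I) : ℕ :=
  if A i j * A j i = 0 then 2
  else if A i j * A j i = 1 then 3
  else if A i j * A j i = 2 then 4
  else if A i j * A j i = 3 then 6
  else 0

theorem mLabel_symm (A : I → I → ℤ) (i j : I) : mLabel A i j = mLabel A j i := by
  unfold mLabel; rw [mul_comm]

theorem mLabel_ne_one (A : I → I → ℤ) (i j : I) : mLabel A i j ≠ 1 := by
  unfold mLabel; split_ifs <;> simp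

/-- The defining relators of `Ŵ`. -/
def whatRels (A : I → I → ℤ) : Set (FreeGroup I) :=
  {r | ∃ i j : I, i ≠ j ∧ mLabel A i j ≠ 0 ∧
      r = altWord i j (mLabel A i j) * (altWord j i (mLabel A i j))⁻¹} ∪
  {r | ∃ i j : I, i ≠ j ∧
      r = FreeGroup.of i ^ 2 * FreeGroup.of j * (FreeGroup.of i ^ 2)⁻¹ *
        (if Even (A i j) then (FreeGroup.of j)⁻¹ else FreeGroup.of j)}

/-- The group `Ŵ`. -/
abbrev What (A : I → I → ℤ) : Type _ := PresentedGroup (whatRels A)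

/-- The generator `S_i` of `Ŵ`. -/
def S (A : I → I → ℤ) (i : I) : What A := PresentedGroup.of i

/-- The Coxeter matrix `M` with `M i i = 1` and `M i j = m i j` (where `∞` is
encoded as `0`) for `i ≠ j`. -/
def coxMatrix (A : I → I → ℤ) [DecidableEq I] : CoxeterMatrix I where
  M := Matrix.of fun i j => if i = j then 1 else mLabel A i j
  isSymm := by
    ext i j
    simp only [Matrix.transpose_apply, Matrix.of_apply]
    rcases eq_or_ne i j with h | h
    · simp [h]
    · simp [h, h.symm, mLabel_symm A j i]
  diagonal := by intro i; simp
  off_diagonal := by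
    intro i j h
    simp only [Matrix.of_apply, if_neg h]
    exact mLabel_ne_one A i j

end PaperAmalgams

/-!
In `W` every `s_i` is an involution, so the Artin relator of `Ŵ` for `i, j` maps to the Coxeter
relator `(s_i s_j)^{m_ij}` and the relators `S_i² S_j S_i⁻² S_j^{±1}` map to `1`; this gives `π`,
and `π` kills every `S_i²`. Conversely, the second family of relators says that `S_i²` commutes
with `S_j` or inverts it, so conjugating `S_i²` by `S_j^{±1}` yields `S_i²` or
`S_i² S_j⁻²` (resp. `S_j⁻² S_i²`); hence the subgroup `N` generated by the squares is normal. In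
`Ŵ/N` the images of the `S_i` are involutions satisfying the braid relations, i.e. the Coxeter
relations, so `s_i ↦ S_i N` defines `W → Ŵ/N` whose composite with `π` is the quotient map.
Therefore `ker π ⊆ N`.
-/

theorem Subgroup.closure_normal_of_conj_mem {G : Type*} [Group G] {s t : Set G}
    (ht : Subgroup.closure t = ⊤)
    (hconj : ∀ g ∈ t, ∀ x ∈ s,
      g * x * g⁻¹ ∈ Subgroup.closure s ∧ g⁻¹ * x * g ∈ Subgroup.closure s) :
    (Subgroup.closure s).Normal := by
  rw [← Subgroup.normalizer_eq_top_iff, eq_top_iff, ← ht, Subgroup.closure_le]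
  intro g hg
  rw [SetLike.mem_coe, Subgroup.mem_normalizer_iff_map_conj_eq, MonoidHom.map_closure]
  apply le_antisymm
  · rw [Subgroup.closure_le]
    rintro _ ⟨x, hx, rfl⟩
    exact (hconj g hg x hx).1
  · rw [Subgroup.closure_le, ← MonoidHom.map_closure]
    intro x hx
    exact ⟨g⁻¹ * x * g, (hconj g hg x hx).2, by simp [mul_assoc]⟩

theorem conj_eq_of_conj_eq_inv {G : Type*} [Group G] {a b : G} (h : a * b * a⁻¹ = b⁻¹) :
    b * a * b⁻¹ = a * (b ^ 2)⁻¹ ∧ b⁻¹ * a * b = (b ^ 2)⁻¹ * a := by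
  have hab : a * b = b⁻¹ * a := calc
    a * b = a * b * a⁻¹ * a := by group
    _ = b⁻¹ * a := by rw [h]
  have hba : b * a = a * b⁻¹ := calc
    b * a = (a * b * a⁻¹)⁻¹ * a := by rw [h, inv_inv]
    _ = a * b⁻¹ := by group
  constructor
  · rw [hba]; group
  · rw [mul_assoc, hab]; group

namespace PaperAmalgams

theorem map_altWord_mul_inv_altWord {I G : Type*} [Group G] (F : FreeGroup I →* G) {i j : I}
    (hi : F (.of i) ^ 2 = 1) (hj : F (.of j) ^ 2 = 1) (n : ℕ) :
    F (altWord i j n * (altWord j i n)⁻¹) = (F (.of i) * F (.of j)) ^ n := by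
  induction n generalizing i j with
  | zero => simp [altWord]
  | succ n ih =>
    have hj_inv : (F (.of j))⁻¹ = F (.of j) := inv_eq_of_mul_eq_one_right (by rw [← sq, hj])
    calc F (altWord i j (n + 1) * (altWord j i (n + 1))⁻¹)
        = F (.of i) * F (altWord j i n * (altWord i j n)⁻¹) * (F (.of j))⁻¹ := by
          simp [altWord, mul_assoc]
      _ = F (.of i) * (F (.of j) * F (.of i)) ^ n * F (.of j) := by rw [ih hj hi, hj_inv]
      _ = (F (.of i) * F (.of j)) ^ (n + 1) := by rw [← mul_pow_mul, mul_assoc, pow_succ]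

theorem lift_eq_one_of_mem_whatRels {I G : Type*} [Group G] (A : I → I → ℤ) {f : I → G}
    (hsq : ∀ i, f i ^ 2 = 1) (hbraid : ∀ i j, i ≠ j → (f i * f j) ^ mLabel A i j = 1)
    {r : FreeGroup I} (hr : r ∈ whatRels A) : FreeGroup.lift f r = 1 := by
  rcases hr with ⟨i, j, hij, -, rfl⟩ | ⟨i, j, -, rfl⟩
  · rw [map_altWord_mul_inv_altWord _ (by simpa using hsq i) (by simpa using hsq j)]
    simpa using hbraid i j hij
  · split_ifs <;> simp [hsq, ← sq]

variable {I : Type*} (A : I → I → ℤ)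

def sqSubgroup : Subgroup (What A) :=
  Subgroup.closure (Set.range fun i => S A i ^ 2)

theorem S_sq_mem_sqSubgroup (i : I) : S A i ^ 2 ∈ sqSubgroup A :=
  Subgroup.subset_closure ⟨i, rfl⟩

theorem S_sq_conj_S {i j : I} (hij : i ≠ j) :
    S A i ^ 2 * S A j * (S A i ^ 2)⁻¹ = if Even (A i j) then S A j else (S A j)⁻¹ := by
  have h := PresentedGroup.one_of_mem (rels := whatRels A) (Or.inr ⟨i, j, hij, rfl⟩)
  simp only [map_mul, map_pow, map_inv, apply_ite] at h
  split_ifs at h ⊢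
  · exact mul_inv_eq_one.mp h
  · exact mul_eq_one_iff_eq_inv.mp h

theorem S_conj_S_sq_mem (i j : I) :
    S A j * S A i ^ 2 * (S A j)⁻¹ ∈ sqSubgroup A ∧
      (S A j)⁻¹ * S A i ^ 2 * S A j ∈ sqSubgroup A := by
  have hi := S_sq_mem_sqSubgroup A i
  obtain rfl | hij := eq_or_ne i j
  · constructor <;> convert hi using 1 <;> group
  have h := S_sq_conj_S A hij
  split_ifs at h
  · have hc : Commute (S A j) (S A i ^ 2) := (mul_inv_eq_iff_eq_mul.mp h).symm
    rw [hc.mul_inv_cancel, hc.inv_mul_cancel]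
    exact ⟨hi, hi⟩
  · obtain ⟨h₁, h₂⟩ := conj_eq_of_conj_eq_inv h
    rw [h₁, h₂]
    have hj := S_sq_mem_sqSubgroup A j
    exact ⟨mul_mem hi (inv_mem hj), mul_mem (inv_mem hj) hi⟩

instance sqSubgroup_normal : (sqSubgroup A).Normal :=
  Subgroup.closure_normal_of_conj_mem (PresentedGroup.closure_range_of _)
    (by rintro _ ⟨j, rfl⟩ _ ⟨i, rfl⟩; exact S_conj_S_sq_mem A i j)

variable [DecidableEq I]

theorem coxMatrix_apply_of_ne {i j : I} (hij : i ≠ j) : coxMatrix A i j = mLabel A i j := by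
  simp [coxMatrix, hij]

def toCoxeterGroup : What A →* (coxMatrix A).Group :=
  PresentedGroup.toGroup fun _ ↦
    lift_eq_one_of_mem_whatRels A (coxMatrix A).toCoxeterSystem.simple_sq fun i j hij ↦
      coxMatrix_apply_of_ne A hij ▸ (coxMatrix A).toCoxeterSystem.simple_mul_simple_pow i j

theorem toCoxeterGroup_S (i : I) : toCoxeterGroup A (S A i) = (coxMatrix A).simple i :=
  PresentedGroup.toGroup.of _

theorem isLiftable_mk_S :
    (coxMatrix A).IsLiftable fun i ↦ QuotientGroup.mk' (sqSubgroup A) (S A i) := by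
  set F := (QuotientGroup.mk' (sqSubgroup A)).comp (PresentedGroup.mk (whatRels A))
  have hsq (i : I) : F (.of i) ^ 2 = 1 :=
    (QuotientGroup.eq_one_iff _).mpr (S_sq_mem_sqSubgroup A i)
  intro i j
  obtain rfl | hij := eq_or_ne i j
  · rw [(coxMatrix A).diagonal i, pow_one, ← sq]
    exact hsq i
  rw [coxMatrix_apply_of_ne A hij]
  obtain hm | hm := eq_or_ne (mLabel A i j) 0
  · rw [hm, pow_zero]
  · change (F (.of i) * F (.of j)) ^ mLabel A i j = 1
    rw [← map_altWord_mul_inv_altWord F (hsq i) (hsq j), MonoidHom.comp_apply,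
      PresentedGroup.one_of_mem (Or.inl ⟨i, j, hij, hm, rfl⟩), map_one]

def ofCoxeterGroup : (coxMatrix A).Group →* What A ⧸ sqSubgroup A :=
  (coxMatrix A).toCoxeterSystem.lift ⟨_, isLiftable_mk_S A⟩

theorem ofCoxeterGroup_comp_toCoxeterGroup :
    (ofCoxeterGroup A).comp (toCoxeterGroup A) = QuotientGroup.mk' (sqSubgroup A) :=
  PresentedGroup.ext fun i ↦ by
    rw [MonoidHom.comp_apply, ← S, toCoxeterGroup_S]
    exact (coxMatrix A).toCoxeterSystem.lift_apply_simple _ i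

theorem ker_toCoxeterGroup : (toCoxeterGroup A).ker = sqSubgroup A := by
  apply le_antisymm
  · calc (toCoxeterGroup A).ker ≤ ((ofCoxeterGroup A).comp (toCoxeterGroup A)).ker :=
          fun g hg ↦ by rw [MonoidHom.mem_ker, MonoidHom.comp_apply, hg, map_one]
      _ = sqSubgroup A := by rw [ofCoxeterGroup_comp_toCoxeterGroup, QuotientGroup.ker_mk']
  · rw [sqSubgroup, Subgroup.closure_le]
    rintro _ ⟨i, rfl⟩
    rw [SetLike.mem_coe, MonoidHom.mem_ker, map_pow, toCoxeterGroup_S]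
    exact (coxMatrix A).toCoxeterSystem.simple_sq i

end PaperAmalgams

open PaperAmalgams in
theorem what_to_coxeter_general {I : Type*} [DecidableEq I] (A : I → I → ℤ) :
    ∃ π : What A →* (coxMatrix A).Group,
      (∀ i : I, π (S A i) = (coxMatrix A).simple i) ∧
      MonoidHom.ker π = Subgroup.closure (Set.range fun i : I => S A i ^ 2) :=
  ⟨toCoxeterGroup A, toCoxeterGroup_S A, ker_toCoxeterGroup A⟩

open PaperAmalgams in
/-- The assignment `S_i ↦ s_i` extends to a homomorphism `π : Ŵ → W` to the Coxeter
group `W` of the Coxeter matrix `M`, and `ker π` is exactly the subgroup of `Ŵ`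
generated by the squares `S_i²`. -/
theorem what_to_coxeter {I : Type*} [DecidableEq I] (A : I → I → ℤ)
    (hA_diag : ∀ i, A i i = 2)
    (hA_off : ∀ i j, i ≠ j → A i j ≤ 0)
    (hA_zero : ∀ i j, A i j = 0 ↔ A j i = 0) :
    ∃ π : What A →* (coxMatrix A).Group,
      (∀ i : I, π (S A i) = (coxMatrix A).simple i) ∧
      MonoidHom.ker π = Subgroup.closure (Set.range fun i : I => S A i ^ 2) :=
  what_to_coxeter_general A
end

section
/- If i ≠ j in I and A i j is odd, then S_j⁸ = 1 in the group Ŵ. -/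
/-! Write `s = S_i`, `t = S_j`. The relator for `(i, j)` says that conjugation by `s²` inverts `t`,
hence also `t²`. The relator for `(j, i)` says that conjugation by `t²` fixes or inverts `s`; either
way `t⁴` commutes with `s`. Conjugating `t⁴` by `s²` therefore gives both `t⁴` and `t⁻⁴`,
so `t⁸ = 1`. -/

namespace PaperAmalgams

variable {I : Type*}

theorem semiconjBy_S_sq (A : I → I → ℤ) {i j : I} (hij : i ≠ j) :
    SemiconjBy (S A i ^ 2) (S A j) (if Even (A i j) then S A j else (S A j)⁻¹) := by
  have hrel := PresentedGroup.one_of_mem (rels := whatRels A) (Or.inr ⟨i, j, hij, rfl⟩)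
  rw [SemiconjBy, ← mul_inv_eq_iff_eq_mul]
  split_ifs at hrel ⊢
  · exact mul_inv_eq_one.mp hrel
  · exact mul_eq_one_iff_eq_inv.mp hrel

end PaperAmalgams

section SemiconjBy

variable {G : Type*} [Group G] {a b : G}

theorem SemiconjBy.commute_sq_of_inv (h : SemiconjBy a b b⁻¹) : Commute (a ^ 2) b := by
  rw [sq]
  exact SemiconjBy.mul_left (by simpa using h.inv_right) h

theorem pow_four_eq_one_of_semiconjBy_inv (h : SemiconjBy b a a⁻¹) (hc : Commute b (a ^ 2)) :
    a ^ 4 = 1 := by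
  have hsq : a ^ 2 = (a⁻¹) ^ 2 := mul_right_cancel (hc.eq.symm.trans (h.pow_right 2).eq)
  calc a ^ 4 = a ^ 2 * (a⁻¹) ^ 2 := by rw [← hsq, ← pow_add]
    _ = 1 := by rw [inv_pow, mul_inv_cancel]

end SemiconjBy

open PaperAmalgams in
theorem what_eighth_power_eq_one_general {I : Type*} (A : I → I → ℤ)
    (i j : I) (hij : i ≠ j) (hodd : Odd (A i j)) :
    S A j ^ 8 = 1 := by
  have hi : SemiconjBy (S A i ^ 2) (S A j) (S A j)⁻¹ := by
    simpa [Int.not_even_iff_odd.mpr hodd] using semiconjBy_S_sq A hij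
  have hj : Commute ((S A j ^ 2) ^ 2) (S A i) := by
    have hji := semiconjBy_S_sq A hij.symm
    split_ifs at hji
    · exact Commute.pow_left hji 2
    · exact hji.commute_sq_of_inv
  have h4 : (S A j ^ 2) ^ 4 = 1 :=
    pow_four_eq_one_of_semiconjBy_inv (by simpa using hi.pow_right 2) (hj.pow_right 2).symm
  rwa [← pow_mul] at h4

open PaperAmalgams in
/-- If `i ≠ j` and `A i j` is odd, then `S_j⁸ = 1` in `Ŵ`. -/
theorem what_eighth_power_eq_one {I : Type*} (A : I → I → ℤ)
    (hA_diag : ∀ i, A i i = 2)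
    (hA_off : ∀ i j, i ≠ j → A i j ≤ 0)
    (hA_zero : ∀ i j, A i j = 0 ↔ A j i = 0)
    (i j : I) (hij : i ≠ j) (hodd : Odd (A i j)) :
    S A j ^ 8 = 1 :=
  what_eighth_power_eq_one_general A i j hij hodd
end

section
/- For i ≠ j in I, the commutator [S_j², S_i²] = S_j² S_i² S_j⁻² S_i⁻² in Ŵ equals 1 if A i j is even, and equals S_j⁴ if A i j is odd; in particular this commutator is central in Ŵ. -/
/-! Conjugation by `S_i²` fixes `S_j` when `A i j` is even and inverts it when `A i j` is odd.
Hence `⁅S_j², S_i²⁆ = S_j² (S_i² S_j S_i⁻²)⁻²` is `S_j² S_j⁻² = 1` or `S_j² S_j² = S_j⁴`.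
Moreover conjugation by `S_j⁴`, the square of conjugation by `S_j²`, fixes every generator,
so `S_j⁴` is central. -/

open scoped commutatorElement

section Group

variable {G : Type*} [Group G] {a b : G}

theorem commutatorElement_sq_eq_pow_four_of_conj_eq_inv (h : a * b * a⁻¹ = b⁻¹) :
    ⁅b ^ 2, a⁆ = b ^ 4 := by
  have hsq : a * b ^ 2 * a⁻¹ = b⁻¹ ^ 2 := by rw [← h, ← conj_pow]
  calc ⁅b ^ 2, a⁆ = b ^ 2 * (a * b ^ 2 * a⁻¹)⁻¹ := by rw [commutatorElement_def]; group
    _ = b ^ 4 := by rw [hsq]; group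

theorem commute_sq_of_conj_eq_inv (h : a * b * a⁻¹ = b⁻¹) : Commute (a ^ 2) b := by
  have hinv : a * b⁻¹ * a⁻¹ = b := by rw [← conj_inv, h, inv_inv]
  rw [commute_iff_eq, ← mul_inv_eq_iff_eq_mul]
  calc a ^ 2 * b * (a ^ 2)⁻¹
      = a * (a * b * a⁻¹) * a⁻¹ := by rw [sq, mul_inv_rev]; simp only [mul_assoc]
    _ = b := by rw [h, hinv]

end Group

theorem PresentedGroup.mem_center_of_forall_commute_of {α : Type*} {rels : Set (FreeGroup α)}
    {g : PresentedGroup rels} (h : ∀ a, Commute (PresentedGroup.of a) g) :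
    g ∈ Subgroup.center (PresentedGroup rels) := by
  rw [Subgroup.center_eq_iInf (PresentedGroup.closure_range_of rels)]
  simp only [Subgroup.mem_iInf, Set.forall_mem_range, Subgroup.mem_centralizer_singleton_iff]
  exact fun a => (h a).symm.eq

namespace PaperAmalgams

variable {I : Type*} (A : I → I → ℤ) {i j : I}

theorem S_sq_mul_S_mul_S_sq_inv (hij : i ≠ j) :
    S A i ^ 2 * S A j * (S A i ^ 2)⁻¹ = if Even (A i j) then S A j else (S A j)⁻¹ := by
  have hrel := PresentedGroup.one_of_mem (rels := whatRels A) (Or.inr ⟨i, j, hij, rfl⟩)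
  simp only [map_mul, map_pow, map_inv, apply_ite (PresentedGroup.mk (whatRels A))] at hrel
  split_ifs at hrel ⊢
  · exact mul_inv_eq_one.1 hrel
  · exact mul_eq_one_iff_eq_inv.1 hrel

theorem commute_S_sq_S_of_even (hij : i ≠ j) (h : Even (A i j)) :
    Commute (S A i ^ 2) (S A j) := by
  rw [commute_iff_eq, ← mul_inv_eq_iff_eq_mul, S_sq_mul_S_mul_S_sq_inv A hij, if_pos h]

theorem S_sq_mul_S_mul_S_sq_inv_of_odd (hij : i ≠ j) (h : Odd (A i j)) :
    S A i ^ 2 * S A j * (S A i ^ 2)⁻¹ = (S A j)⁻¹ := by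
  rw [S_sq_mul_S_mul_S_sq_inv A hij, if_neg (Int.not_even_iff_odd.2 h)]

theorem S_pow_four_mem_center (j : I) : S A j ^ 4 ∈ Subgroup.center (What A) := by
  refine PresentedGroup.mem_center_of_forall_commute_of fun k => ?_
  show Commute (S A k) (S A j ^ 4)
  by_cases hkj : k = j
  · subst hkj
    exact (Commute.refl _).pow_right 4
  rw [show S A j ^ 4 = (S A j ^ 2) ^ 2 by group]
  refine Commute.symm ?_
  rcases Int.even_or_odd (A j k) with h | h
  · exact (commute_S_sq_S_of_even A (Ne.symm hkj) h).pow_left 2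
  · exact commute_sq_of_conj_eq_inv (S_sq_mul_S_mul_S_sq_inv_of_odd A (Ne.symm hkj) h)

end PaperAmalgams

open PaperAmalgams in
theorem what_commutator_of_squares_general {I : Type*} (A : I → I → ℤ)
    (i j : I) (hij : i ≠ j) :
    (Even (A i j) → ⁅S A j ^ 2, S A i ^ 2⁆ = 1) ∧
    (Odd (A i j) → ⁅S A j ^ 2, S A i ^ 2⁆ = S A j ^ 4) ∧
    ⁅S A j ^ 2, S A i ^ 2⁆ ∈ Subgroup.center (What A) := by
  have heven (h : Even (A i j)) : ⁅S A j ^ 2, S A i ^ 2⁆ = 1 :=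
    commutatorElement_eq_one_iff_commute.2 ((commute_S_sq_S_of_even A hij h).symm.pow_left 2)
  have hodd (h : Odd (A i j)) : ⁅S A j ^ 2, S A i ^ 2⁆ = S A j ^ 4 :=
    commutatorElement_sq_eq_pow_four_of_conj_eq_inv (S_sq_mul_S_mul_S_sq_inv_of_odd A hij h)
  refine ⟨heven, hodd, ?_⟩
  rcases Int.even_or_odd (A i j) with h | h
  · exact heven h ▸ Subgroup.one_mem _
  · exact hodd h ▸ S_pow_four_mem_center A j

open PaperAmalgams in
/-- For `i ≠ j`, the commutator `[S_j², S_i²] = S_j² S_i² S_j⁻² S_i⁻²` in `Ŵ` equals `1`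
if `A i j` is even and equals `S_j⁴` if `A i j` is odd; in particular it is central. -/
theorem what_commutator_of_squares {I : Type*} (A : I → I → ℤ)
    (hA_diag : ∀ i, A i i = 2)
    (hA_off : ∀ i j, i ≠ j → A i j ≤ 0)
    (hA_zero : ∀ i j, A i j = 0 ↔ A j i = 0)
    (i j : I) (hij : i ≠ j) :
    (Even (A i j) → ⁅S A j ^ 2, S A i ^ 2⁆ = 1) ∧
    (Odd (A i j) → ⁅S A j ^ 2, S A i ^ 2⁆ = S A j ^ 4) ∧
    ⁅S A j ^ 2, S A i ^ 2⁆ ∈ Subgroup.center (What A) :=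
  what_commutator_of_squares_general A i j hij
end

section
/- For i ≠ j in I: if both A i j and A j i are odd, then S_i⁴ = S_j⁴ in Ŵ; and if A i j is even while A j i is odd, then S_i⁴ = 1 in Ŵ. -/
/-! Conjugation by `S_i²` fixes or inverts `S_j` according to the parity of `A i j`, hence
does the same to `S_j²`. For `X = S_i²` and `Y = S_j²` both claims are then identities valid in
any group: if `X` and `Y` invert each other under conjugation, `X Y X = Y` and `X Y = Y⁻¹ X`
give `X² = Y²`; if `X` commutes with `Y` and `Y` inverts `X`, then `X = X⁻¹`. -/

section

variable {G : Type*} [Group G] {x y : G}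

theorem sq_eq_sq_of_semiconjBy_inv (hxy : SemiconjBy x y y⁻¹) (hyx : SemiconjBy y x x⁻¹) :
    x ^ 2 = y ^ 2 := by
  have hxyx : x * y * x = y := by rw [mul_assoc, hyx.eq, mul_inv_cancel_left]
  rw [hxy.eq, mul_assoc, inv_mul_eq_iff_eq_mul, ← sq] at hxyx
  rw [hxyx, sq]

theorem sq_eq_one_of_commute_of_semiconjBy_inv (hxy : Commute x y) (hyx : SemiconjBy y x x⁻¹) :
    x ^ 2 = 1 := by
  have hx : x = x⁻¹ := mul_right_cancel (hxy.symm.eq.symm.trans hyx.eq)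
  rw [sq, ← mul_inv_cancel x, ← hx]

end

namespace PaperAmalgams

variable {I : Type*}

theorem S_sq_mul_S_mul_inv_S_sq (A : I → I → ℤ) {i j : I} (hij : i ≠ j) :
    S A i ^ 2 * S A j * (S A i ^ 2)⁻¹ = if Even (A i j) then S A j else (S A j)⁻¹ := by
  have h := PresentedGroup.one_of_mem (rels := whatRels A) (Or.inr ⟨i, j, hij, rfl⟩)
  split_ifs at h ⊢ <;>
    simpa [S, PresentedGroup.of, mul_inv_eq_one, mul_eq_one_iff_eq_inv] using h

theorem commute_S_sq_of_even (A : I → I → ℤ) {i j : I} (hij : i ≠ j) (h : Even (A i j)) :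
    Commute (S A i ^ 2) (S A j ^ 2) := by
  have hconj := S_sq_mul_S_mul_inv_S_sq A hij
  rw [if_pos h, mul_inv_eq_iff_eq_mul] at hconj
  exact Commute.pow_right hconj 2

theorem semiconjBy_S_sq_of_odd (A : I → I → ℤ) {i j : I} (hij : i ≠ j) (h : Odd (A i j)) :
    SemiconjBy (S A i ^ 2) (S A j ^ 2) (S A j ^ 2)⁻¹ := by
  have hconj := S_sq_mul_S_mul_inv_S_sq A hij
  rw [if_neg (Int.not_even_iff_odd.mpr h), mul_inv_eq_iff_eq_mul] at hconj
  simpa only [inv_pow] using SemiconjBy.pow_right hconj 2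

end PaperAmalgams

open PaperAmalgams in
theorem what_fourth_powers_general {I : Type*} (A : I → I → ℤ)
    (i j : I) (hij : i ≠ j) :
    (Odd (A i j) → Odd (A j i) → S A i ^ 4 = S A j ^ 4) ∧
    (Even (A i j) → Odd (A j i) → S A i ^ 4 = 1) := by
  have hpow (k : I) : S A k ^ 4 = (S A k ^ 2) ^ 2 := by rw [← pow_mul]
  refine ⟨fun hij_odd hji_odd => ?_, fun hij_even hji_odd => ?_⟩
  · rw [hpow, hpow]
    exact sq_eq_sq_of_semiconjBy_inv (semiconjBy_S_sq_of_odd A hij hij_odd)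
      (semiconjBy_S_sq_of_odd A hij.symm hji_odd)
  · rw [hpow]
    exact sq_eq_one_of_commute_of_semiconjBy_inv (commute_S_sq_of_even A hij hij_even)
      (semiconjBy_S_sq_of_odd A hij.symm hji_odd)

open PaperAmalgams in
/-- For `i ≠ j`: if both `A i j` and `A j i` are odd then `S_i⁴ = S_j⁴` in `Ŵ`;
if `A i j` is even while `A j i` is odd then `S_i⁴ = 1` in `Ŵ`. -/
theorem what_fourth_powers {I : Type*} (A : I → I → ℤ)
    (hA_diag : ∀ i, A i i = 2)
    (hA_off : ∀ i j, i ≠ j → A i j ≤ 0)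
    (hA_zero : ∀ i j, A i j = 0 ↔ A j i = 0)
    (i j : I) (hij : i ≠ j) :
    (Odd (A i j) → Odd (A j i) → S A i ^ 4 = S A j ^ 4) ∧
    (Even (A i j) → Odd (A j i) → S A i ^ 4 = 1) :=
  what_fourth_powers_general A i j hij
end

section
/- The natural homomorphism from the amalgamated free product (U ∞ ⋊ H_∞) ∗_{H_∞} H (amalgamated along the inclusions of H_∞ into the two factors) to the semidirect product K ⋊_φ H — induced by the evident inclusion of U ∞ ⋊ H_∞ into K ⋊_φ H and the inclusion of H into K ⋊_φ H — is an isomorphism of groups. -/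
/-! If a group `H` acts transitively on a nonempty set `Φ`, acts by automorphisms on the
free product `K = ∗_{α ∈ Φ} U α` permuting the factors accordingly, then
`K ⋊ H ≅ (U ∞ ⋊ H_∞) ∗_{H_∞} H`. -/

namespace PaperAmalgams

universe u v

variable {H : Type u} [Group H] {Φ : Type v} [MulAction H Φ]
  (U : Φ → Type u) [∀ α, Group (U α)]
  (φ : H →* MulAut (Monoid.CoprodI U)) (pt : Φ)
  (ψ : ↥(MulAction.stabilizer H pt) →* MulAut (U pt))

/-- The two factors of the amalgam: `U ∞ ⋊ H_∞` (at `true`) and `H` (at `false`). -/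
def Fam : Bool → Type u
  | true => U pt ⋊[ψ] ↥(MulAction.stabilizer H pt)
  | false => H

instance : ∀ b, Group (Fam U pt ψ b)
  | true => inferInstanceAs (Group (_ ⋊[_] _))
  | false => inferInstanceAs (Group H)

/-- The inclusions of `H_∞` into the two factors. -/
def baseMaps : ∀ b, ↥(MulAction.stabilizer H pt) →* Fam U pt ψ b
  | true => SemidirectProduct.inr
  | false => (MulAction.stabilizer H pt).subtype

/-- The amalgamated free product `(U ∞ ⋊ H_∞) ∗_{H_∞} H`, realized as the pushout of the
two inclusions of `H_∞`. -/
abbrev Amalgam : Type _ := Monoid.PushoutI (baseMaps U pt ψ)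

/-- Compatibility of the restricted action `ψ` with conjugation in `K ⋊ H`. -/
theorem factor_compat
    (hψ : ∀ (h : MulAction.stabilizer H pt) (u : U pt),
      φ h (Monoid.CoprodI.of u) = Monoid.CoprodI.of (ψ h u))
    (g : ↥(MulAction.stabilizer H pt)) :
    ((SemidirectProduct.inl : Monoid.CoprodI U →* Monoid.CoprodI U ⋊[φ] H).comp
        (Monoid.CoprodI.of (i := pt))).comp (MulEquiv.toMonoidHom (ψ g)) =
      (MulEquiv.toMonoidHom
          (MulAut.conj
            (((SemidirectProduct.inr : H →* Monoid.CoprodI U ⋊[φ] H).comp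
              (MulAction.stabilizer H pt).subtype) g))).comp
        ((SemidirectProduct.inl : Monoid.CoprodI U →* Monoid.CoprodI U ⋊[φ] H).comp
          (Monoid.CoprodI.of (i := pt))) := by
  refine MonoidHom.ext fun u => ?_
  show SemidirectProduct.inl (Monoid.CoprodI.of ((ψ g) u)) =
    MulAut.conj (SemidirectProduct.inr (φ := φ) (g : H))
      (SemidirectProduct.inl (Monoid.CoprodI.of u))
  rw [MulAut.conj_apply, ← map_inv, ← SemidirectProduct.inl_aut, hψ]

/-- The evident homomorphisms from the two factors to `K ⋊ H`. -/
def factorMaps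
    (hψ : ∀ (h : MulAction.stabilizer H pt) (u : U pt),
      φ h (Monoid.CoprodI.of u) = Monoid.CoprodI.of (ψ h u)) :
    ∀ b, Fam U pt ψ b →* Monoid.CoprodI U ⋊[φ] H
  | true =>
    SemidirectProduct.lift
      (SemidirectProduct.inl.comp Monoid.CoprodI.of)
      (SemidirectProduct.inr.comp (MulAction.stabilizer H pt).subtype)
      (factor_compat U φ pt ψ hψ)
  | false => SemidirectProduct.inr

/-- The natural homomorphism `(U ∞ ⋊ H_∞) ∗_{H_∞} H → K ⋊ H`, induced by the evident
inclusion of `U ∞ ⋊ H_∞` and the inclusion of `H`. -/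
def naturalHom
    (hψ : ∀ (h : MulAction.stabilizer H pt) (u : U pt),
      φ h (Monoid.CoprodI.of u) = Monoid.CoprodI.of (ψ h u)) :
    Amalgam U pt ψ →* Monoid.CoprodI U ⋊[φ] H :=
  Monoid.PushoutI.lift (factorMaps U φ pt ψ hψ)
    (SemidirectProduct.inr.comp (MulAction.stabilizer H pt).subtype)
    (by
      intro b
      cases b
      · rfl
      · exact SemidirectProduct.lift_comp_inr _ _ (factor_compat U φ pt ψ hψ))

end PaperAmalgams

/-! The inverse map sends `h ∈ H` to itself and `u ∈ U α` to `s u' s⁻¹`, where `s = sec H pt α`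
carries `∞` to `α` and `u' ∈ U ∞` is the element with `φ s u' = u`. The universal property of the
free product makes this a homomorphism on `K`; it intertwines `φ h` with conjugation by `h`
because `h` factors as `s g` with `g ∈ H_∞`, on which `φ g` restricts to `ψ g`, and `ψ g` is
conjugation by `g` inside the amalgam. Both composites fix the generators. -/

namespace MonoidHom

variable {A B C : Type*} [Group A] [Group B] [Group C] {f : A →* C} {g : B →* C}

noncomputable def equivOfRangeEq (hf : Function.Injective f) (hg : Function.Injective g)
    (h : f.range = g.range) : A ≃* B :=
  (ofInjective hf).trans ((MulEquiv.subgroupCongr h).trans (ofInjective hg).symm)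

theorem apply_equivOfRangeEq (hf : Function.Injective f) (hg : Function.Injective g)
    (h : f.range = g.range) (a : A) : g (equivOfRangeEq hf hg h a) = f a := by
  simp [equivOfRangeEq, apply_ofInjective_symm, ofInjective_apply]

theorem apply_equivOfRangeEq_symm (hf : Function.Injective f) (hg : Function.Injective g)
    (h : f.range = g.range) (b : B) : f ((equivOfRangeEq hf hg h).symm b) = g b := by
  rw [← apply_equivOfRangeEq hf hg h, MulEquiv.apply_symm_apply]

end MonoidHom

namespace PaperAmalgams

open Monoid

universe u v

variable {H : Type u} [Group H] {Φ : Type v} [MulAction H Φ] {U : Φ → Type u}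
  [∀ α, Group (U α)] {φ : H →* MulAut (CoprodI U)} {pt : Φ}
  {ψ : ↥(MulAction.stabilizer H pt) →* MulAut (U pt)}

variable (hφ : ∀ (h : H) (α : Φ),
      Subgroup.map (φ h).toMonoidHom
          (MonoidHom.range (CoprodI.of : U α →* CoprodI U)) =
        MonoidHom.range (CoprodI.of : U (h • α) →* CoprodI U))
  (hψ : ∀ (h : MulAction.stabilizer H pt) (u : U pt),
      φ h (CoprodI.of u) = CoprodI.of (ψ h u))

include hφ in
theorem range_of_eq_range_comp_of {h : H} {β α : Φ} (hβ : h • β = α) :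
    (CoprodI.of : U α →* CoprodI U).range =
      ((φ h).toMonoidHom.comp (CoprodI.of : U β →* CoprodI U)).range := by
  subst hβ
  rw [MonoidHom.range_comp, hφ]

variable (ψ) in
def ofH : H →* Amalgam U pt ψ := PushoutI.of (φ := baseMaps U pt ψ) false

variable (ψ) in
def ofU : U pt →* Amalgam U pt ψ := (PushoutI.of true).comp (SemidirectProduct.inl (φ := ψ))

theorem ofH_stabilizer (g : MulAction.stabilizer H pt) :
    ofH ψ (g : H) = PushoutI.of (φ := baseMaps U pt ψ) true (SemidirectProduct.inr g) :=
  (PushoutI.of_apply_eq_base (baseMaps U pt ψ) false g).trans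
    (PushoutI.of_apply_eq_base (baseMaps U pt ψ) true g).symm

theorem conj_ofH_ofU (g : MulAction.stabilizer H pt) (x : U pt) :
    MulAut.conj (ofH ψ (g : H)) (ofU ψ x) = ofU ψ (ψ g x) := by
  let ofTrue : U pt ⋊[ψ] MulAction.stabilizer H pt →* Amalgam U pt ψ :=
    PushoutI.of (φ := baseMaps U pt ψ) true
  have h := congrArg ofTrue (SemidirectProduct.inl_aut g x)
  rw [map_mul, map_mul, map_inv, map_inv] at h
  rw [ofH_stabilizer, MulAut.conj_apply]
  exact h.symm

theorem naturalHom_ofH (h : H) : naturalHom U φ pt ψ hψ (ofH ψ h) = SemidirectProduct.inr h :=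
  PushoutI.lift_of ..

theorem naturalHom_ofU (x : U pt) :
    naturalHom U φ pt ψ hψ (ofU ψ x) = SemidirectProduct.inl (CoprodI.of x) :=
  (PushoutI.lift_of ..).trans (SemidirectProduct.lift_inl _ _ (factor_compat U φ pt ψ hψ) x)

section Transversal

variable [MulAction.IsPretransitive H Φ]

variable (H pt) in
noncomputable def sec (α : Φ) : H := (MulAction.exists_smul_eq H pt α).choose

theorem sec_smul (α : Φ) : sec H pt α • pt = α :=
  (MulAction.exists_smul_eq H pt α).choose_spec

variable (pt) in
noncomputable def pullback (α : Φ) : U α ≃* U pt :=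
  MonoidHom.equivOfRangeEq (CoprodI.of_injective α)
    ((φ (sec H pt α)).injective.comp (CoprodI.of_injective pt))
    (range_of_eq_range_comp_of hφ (sec_smul α))

theorem map_of_pullback (α : Φ) (u : U α) :
    φ (sec H pt α) (CoprodI.of (pullback pt hφ α u)) = CoprodI.of u :=
  MonoidHom.apply_equivOfRangeEq (g := (φ (sec H pt α)).toMonoidHom.comp CoprodI.of) _ _ _ u

theorem of_pullback_symm (α : Φ) (v : U pt) :
    CoprodI.of ((pullback pt hφ α).symm v) = φ (sec H pt α) (CoprodI.of v) :=
  MonoidHom.apply_equivOfRangeEq_symm _ _ _ v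

variable (ψ) in
noncomputable def coprodToAmalgam : CoprodI U →* Amalgam U pt ψ :=
  CoprodI.lift fun α => (MulAut.conj (ofH ψ (sec H pt α))).toMonoidHom.comp
    ((ofU ψ).comp (pullback pt hφ α).toMonoidHom)

theorem coprodToAmalgam_of (α : Φ) (u : U α) :
    coprodToAmalgam ψ hφ (CoprodI.of u) =
      MulAut.conj (ofH ψ (sec H pt α)) (ofU ψ (pullback pt hφ α u)) :=
  CoprodI.lift_of _ _

theorem coprodToAmalgam_map_sec_of (α : Φ) (x : U pt) :
    coprodToAmalgam ψ hφ (φ (sec H pt α) (CoprodI.of x)) =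
      MulAut.conj (ofH ψ (sec H pt α)) (ofU ψ x) := by
  rw [← of_pullback_symm hφ, coprodToAmalgam_of, MulEquiv.apply_symm_apply]

include hψ in
theorem coprodToAmalgam_map_of (h : H) (x : U pt) :
    coprodToAmalgam ψ hφ (φ h (CoprodI.of x)) = MulAut.conj (ofH ψ h) (ofU ψ x) := by
  have key := coprodToAmalgam_map_sec_of (ψ := ψ) hφ (h • pt)
  have hs : sec H pt (h • pt) • pt = h • pt := sec_smul _
  -- forget what `s` is, so that `h` itself can be replaced by `s * g`
  generalize sec H pt (h • pt) = s at key hs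
  obtain ⟨g, rfl⟩ : ∃ g : MulAction.stabilizer H pt, s * g = h :=
    ⟨⟨s⁻¹ * h, by rw [MulAction.mem_stabilizer_iff, mul_smul, ← hs, inv_smul_smul]⟩,
      mul_inv_cancel_left s h⟩
  rw [map_mul, MulAut.mul_apply, hψ, key, ← conj_ofH_ofU, map_mul, map_mul, MulAut.mul_apply]

include hψ in
theorem coprodToAmalgam_comp_map (h : H) :
    (coprodToAmalgam ψ hφ).comp (φ h).toMonoidHom =
      (MulAut.conj (ofH ψ h)).toMonoidHom.comp (coprodToAmalgam ψ hφ) := by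
  refine CoprodI.ext_hom _ _ fun α => MonoidHom.ext fun u => ?_
  change coprodToAmalgam ψ hφ (φ h (CoprodI.of u)) =
    MulAut.conj (ofH ψ h) (coprodToAmalgam ψ hφ (CoprodI.of u))
  rw [← map_of_pullback hφ α u, ← MulAut.mul_apply, ← map_mul, coprodToAmalgam_map_of hφ hψ,
    coprodToAmalgam_map_sec_of hφ, map_mul, map_mul, MulAut.mul_apply]

noncomputable def inverseHom : CoprodI U ⋊[φ] H →* Amalgam U pt ψ :=
  SemidirectProduct.lift (coprodToAmalgam ψ hφ) (ofH ψ) (coprodToAmalgam_comp_map hφ hψ)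

theorem naturalHom_comp_inverseHom :
    (naturalHom U φ pt ψ hψ).comp (inverseHom hφ hψ) = MonoidHom.id _ := by
  refine SemidirectProduct.hom_ext (CoprodI.ext_hom _ _ fun α => MonoidHom.ext fun u => ?_)
    (MonoidHom.ext fun h => ?_)
  · simp only [inverseHom, MonoidHom.coe_comp, Function.comp_apply, SemidirectProduct.lift_inl,
      MonoidHom.id_apply]
    rw [coprodToAmalgam_of, MulAut.conj_apply, map_mul, map_mul, map_inv, naturalHom_ofH,
      naturalHom_ofU, ← map_inv, ← SemidirectProduct.inl_aut, map_of_pullback]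
  · exact naturalHom_ofH hψ h

theorem inverseHom_naturalHom_ofH (h : H) :
    inverseHom hφ hψ (naturalHom U φ pt ψ hψ (ofH ψ h)) = ofH ψ h := by
  rw [naturalHom_ofH, inverseHom, SemidirectProduct.lift_inr]

theorem inverseHom_naturalHom_ofU (x : U pt) :
    inverseHom hφ hψ (naturalHom U φ pt ψ hψ (ofU ψ x)) = ofU ψ x := by
  rw [naturalHom_ofU, inverseHom, SemidirectProduct.lift_inl]
  simpa using coprodToAmalgam_map_of hφ hψ 1 x

theorem inverseHom_comp_naturalHom :
    (inverseHom hφ hψ).comp (naturalHom U φ pt ψ hψ) = MonoidHom.id _ := by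
  refine PushoutI.hom_ext_nonempty fun b => ?_
  cases b
  · exact MonoidHom.ext (inverseHom_naturalHom_ofH hφ hψ)
  · refine SemidirectProduct.hom_ext (MonoidHom.ext (inverseHom_naturalHom_ofU hφ hψ))
      (MonoidHom.ext fun g => ?_)
    have h := inverseHom_naturalHom_ofH hφ hψ (g : H)
    rw [ofH_stabilizer] at h
    exact h

end Transversal

end PaperAmalgams

open PaperAmalgams in
theorem amalgam_natural_hom_bijective_general {H : Type u} [Group H] {Φ : Type v}
    [MulAction H Φ] [MulAction.IsPretransitive H Φ]
    (U : Φ → Type u) [∀ α, Group (U α)]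
    (φ : H →* MulAut (Monoid.CoprodI U))
    (hφ : ∀ (h : H) (α : Φ),
      Subgroup.map (φ h).toMonoidHom
          (MonoidHom.range (Monoid.CoprodI.of : U α →* Monoid.CoprodI U)) =
        MonoidHom.range (Monoid.CoprodI.of : U (h • α) →* Monoid.CoprodI U))
    (pt : Φ) (ψ : ↥(MulAction.stabilizer H pt) →* MulAut (U pt))
    (hψ : ∀ (h : MulAction.stabilizer H pt) (u : U pt),
      φ h (Monoid.CoprodI.of u) = Monoid.CoprodI.of (ψ h u)) :
    Function.Bijective (naturalHom U φ pt ψ hψ) :=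
  (MonoidHom.toMulEquiv _ _ (inverseHom_comp_naturalHom hφ hψ)
    (naturalHom_comp_inverseHom hφ hψ)).bijective

open PaperAmalgams in
/-- Let `H` act transitively on a nonempty set `Φ`, let `K = ∗_{α ∈ Φ} U α` be the free
product of a family of groups, and let `φ : H →* MulAut K` permute the factors compatibly
with the action of `H` on `Φ`.  Fix `∞ ∈ Φ`, let `H_∞` be its stabilizer, and let
`ψ : H_∞ →* MulAut (U ∞)` be the restriction of `φ` to `U ∞`.  Then the natural
homomorphism `(U ∞ ⋊ H_∞) ∗_{H_∞} H → K ⋊_φ H` is an isomorphism. -/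
theorem amalgam_natural_hom_bijective {H : Type u} [Group H] {Φ : Type v}
    [MulAction H Φ] [Nonempty Φ] [MulAction.IsPretransitive H Φ]
    (U : Φ → Type u) [∀ α, Group (U α)]
    (φ : H →* MulAut (Monoid.CoprodI U))
    (hφ : ∀ (h : H) (α : Φ),
      Subgroup.map (φ h).toMonoidHom
          (MonoidHom.range (Monoid.CoprodI.of : U α →* Monoid.CoprodI U)) =
        MonoidHom.range (Monoid.CoprodI.of : U (h • α) →* Monoid.CoprodI U))
    (pt : Φ) (ψ : ↥(MulAction.stabilizer H pt) →* MulAut (U pt))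
    (hψ : ∀ (h : MulAction.stabilizer H pt) (u : U pt),
      φ h (Monoid.CoprodI.of u) = Monoid.CoprodI.of (ψ h u)) :
    Function.Bijective (naturalHom U φ pt ψ hψ) :=
  amalgam_natural_hom_bijective_general U φ hφ pt ψ hψ
end

section
/- There is a group endomorphism φ of St_{B₂}(R) satisfying φ(S) = S′, φ(S′) = S, φ(X(t)) = X′(t²) and φ(X′(t)) = X(t) for all t ∈ R. -/
/-! The exceptional diagram endomorphism of the Steinberg group of type `B₂` in
characteristic `2`. -/

namespace PaperAmalgams

/-- Generators of the Steinberg group of type `B₂`: `S`, `S′` and the `X(t)`, `X′(t)`. -/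
inductive B2Gen (R : Type*)
  | S : B2Gen R
  | S' : B2Gen R
  | X : R → B2Gen R
  | X' : R → B2Gen R

open scoped commutatorElement in
/-- The defining relators of `St_{B₂}(R)` (in its simplified form, valid when `2 = 0` in
`R`): for all `t, u ∈ R`,
`S S′ S S′ = S′ S S′ S`;
`X(t) X(u) = X(t+u)` (& primed);
`S S′ S ⇄ X′(t)` (& primed);
`S X′(t) S⁻¹ ⇄ S′ X(u) S′⁻¹`;
`X′(t) ⇄ S X′(u) S⁻¹` (& primed);
`[X(t), X′(u)] = S′ X(−t u) S′⁻¹ ⬝ S X′(t² u) S⁻¹`;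
`S = X(1) S X(1) S⁻¹ X(1)` (& primed). -/
def b2Rels (R : Type*) [CommRing R] : Set (FreeGroup (B2Gen R)) :=
  let S : FreeGroup (B2Gen R) := .of .S
  let S' : FreeGroup (B2Gen R) := .of .S'
  let X : R → FreeGroup (B2Gen R) := fun t => .of (.X t)
  let X' : R → FreeGroup (B2Gen R) := fun t => .of (.X' t)
  {S * S' * S * S' * (S' * S * S' * S)⁻¹} ∪
  (⋃ (t : R) (u : R),
    {X t * X u * (X (t + u))⁻¹,
     X' t * X' u * (X' (t + u))⁻¹,
     ⁅S * X' t * S⁻¹, S' * X u * S'⁻¹⁆,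
     ⁅X' t, S * X' u * S⁻¹⁆,
     ⁅X t, S' * X u * S'⁻¹⁆,
     (X t * X' u * (X t)⁻¹ * (X' u)⁻¹) *
       (S' * X (-(t * u)) * S'⁻¹ * (S * X' (t ^ 2 * u) * S⁻¹))⁻¹}) ∪
  (⋃ (t : R),
    {⁅S * S' * S, X' t⁆,
     ⁅S' * S * S', X t⁆}) ∪
  {S * (X 1 * S * X 1 * S⁻¹ * X 1)⁻¹,
   S' * (X' 1 * S' * X' 1 * S'⁻¹ * X' 1)⁻¹}

/-- The Steinberg group `St_{B₂}(R)` (presented form, for rings with `2 = 0`). -/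
abbrev StB2 (R : Type*) [CommRing R] : Type _ := PresentedGroup (b2Rels R)

/-- The images of the generators in `St_{B₂}(R)`. -/
def StB2.gen {R : Type*} [CommRing R] (g : B2Gen R) : StB2 R := PresentedGroup.of g

end PaperAmalgams

/-! The relators of `St_{B₂}(R)` hold for a choice of images of the generators exactly when
these images satisfy the relations collected in `B2Relations`. When `2 = 0`, the swap
`s ↔ s'`, `x' ↦ x ↦ x' ∘ (·²)` permutes these relations: additivity of `x' ∘ (·²)` is the
Frobenius identity `(t + u)² = t² + u²`, and the commutator relation becomes its own inverse
with the roles of the two roots exchanged, because `-a = a`. -/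

namespace PaperAmalgams

open scoped commutatorElement

variable {R G : Type*} [CommRing R] [Group G]

structure B2Relations (s s' : G) (x x' : R → G) : Prop where
  braid : s * s' * s * s' = s' * s * s' * s
  x_add (t u : R) : x t * x u = x (t + u)
  x'_add (t u : R) : x' t * x' u = x' (t + u)
  commute_conj_conj (t u : R) : Commute (s * x' t * s⁻¹) (s' * x u * s'⁻¹)
  commute_x'_conj (t u : R) : Commute (x' t) (s * x' u * s⁻¹)
  commute_x_conj (t u : R) : Commute (x t) (s' * x u * s'⁻¹)
  commutatorElement_x_x' (t u : R) :
    ⁅x t, x' u⁆ = s' * x (-(t * u)) * s'⁻¹ * (s * x' (t ^ 2 * u) * s⁻¹)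
  commute_x' (t : R) : Commute (s * s' * s) (x' t)
  commute_x (t : R) : Commute (s' * s * s') (x t)
  s_eq : s = x 1 * s * x 1 * s⁻¹ * x 1
  s'_eq : s' = x' 1 * s' * x' 1 * s'⁻¹ * x' 1

theorem forall_lift_b2Rels_eq_one_iff (f : B2Gen R → G) :
    (∀ r ∈ b2Rels R, FreeGroup.lift f r = 1) ↔
      B2Relations (f .S) (f .S') (fun t => f (.X t)) (fun t => f (.X' t)) := by
  change b2Rels R ⊆ {r | FreeGroup.lift f r = 1} ↔ _
  simp only [b2Rels, Set.union_subset_iff, Set.iUnion_subset_iff, Set.insert_subset_iff,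
    Set.singleton_subset_iff, Set.mem_ofPred_eq, map_mul, map_inv, map_commutatorElement,
    FreeGroup.lift_apply_of, mul_inv_eq_one, commutatorElement_eq_one_iff_commute, forall_and]
  constructor
  · rintro ⟨⟨⟨hb, hx, hx', hcc, hx'c, hxc, hxx'⟩, hsx', hsx⟩, hs, hs'⟩
    exact ⟨hb, hx, hx', hcc, hx'c, hxc, hxx', hsx', hsx, hs, hs'⟩
  · rintro ⟨hb, hx, hx', hcc, hx'c, hxc, hxx', hsx', hsx, hs, hs'⟩
    exact ⟨⟨⟨hb, hx, hx', hcc, hx'c, hxc, hxx'⟩, hsx', hsx⟩, hs, hs'⟩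

theorem StB2.b2Relations :
    B2Relations (StB2.gen .S) (StB2.gen .S') (fun t : R => StB2.gen (.X t))
      (fun t => StB2.gen (.X' t)) := by
  refine (forall_lift_b2Rels_eq_one_iff _).1 fun r hr => ?_
  rw [show FreeGroup.lift StB2.gen = PresentedGroup.mk (b2Rels R) from
    FreeGroup.ext_hom _ _ fun _ => rfl]
  exact PresentedGroup.one_of_mem hr

theorem inv_eq_apply_neg_of_map_add {A : Type*} [AddGroup A] {x : A → G}
    (hx : ∀ t u, x t * x u = x (t + u)) (t : A) : (x t)⁻¹ = x (-t) := by
  have hx0 : x 0 = 1 := by simpa using hx 0 0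
  exact inv_eq_of_mul_eq_one_right (by rw [hx, add_neg_cancel, hx0])

theorem B2Relations.diagramSwap (h2 : (2 : R) = 0) {s s' : G} {x x' : R → G}
    (h : B2Relations s s' x x') : B2Relations s' s (fun t => x' (t ^ 2)) x where
  braid := h.braid.symm
  x_add t u := by rw [h.x'_add]; congr 1; linear_combination (-(t * u)) * h2
  x'_add := h.x_add
  commute_conj_conj t u := (h.commute_conj_conj (u ^ 2) t).symm
  commute_x'_conj := h.commute_x_conj
  commute_x_conj t u := h.commute_x'_conj (t ^ 2) (u ^ 2)
  commutatorElement_x_x' t u := by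
    rw [← commutatorElement_inv, h.commutatorElement_x_x', mul_inv_rev, conj_inv, conj_inv,
      inv_eq_apply_neg_of_map_add h.x_add, inv_eq_apply_neg_of_map_add h.x'_add, neg_neg]
    congr 4 <;> [linear_combination (-(t * u) ^ 2) * h2; ring]
  commute_x' := h.commute_x
  commute_x t := h.commute_x' (t ^ 2)
  s_eq := by simpa only [one_pow] using h.s'_eq
  s'_eq := h.s_eq

end PaperAmalgams

open PaperAmalgams in
/-- If `2 = 0` in the commutative ring `R`, then the map `S ↔ S′`,
`X′(t) ↦ X(t) ↦ X′(t²)` extends to an endomorphism `φ` of `St_{B₂}(R)`. -/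
theorem exists_b2_diagram_endomorphism (R : Type*) [CommRing R] (h2 : (2 : R) = 0) :
    ∃ φ : StB2 R →* StB2 R,
      φ (StB2.gen B2Gen.S) = StB2.gen B2Gen.S' ∧
      φ (StB2.gen B2Gen.S') = StB2.gen B2Gen.S ∧
      (∀ t : R, φ (StB2.gen (B2Gen.X t)) = StB2.gen (B2Gen.X' (t ^ 2))) ∧
      (∀ t : R, φ (StB2.gen (B2Gen.X' t)) = StB2.gen (B2Gen.X t)) := by
  let f : B2Gen R → StB2 R
    | .S => StB2.gen .S'
    | .S' => StB2.gen .S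
    | .X t => StB2.gen (.X' (t ^ 2))
    | .X' t => StB2.gen (.X t)
  have hf : ∀ r ∈ b2Rels R, FreeGroup.lift f r = 1 :=
    (forall_lift_b2Rels_eq_one_iff f).2 (StB2.b2Relations.diagramSwap h2)
  exact ⟨PresentedGroup.toGroup hf, PresentedGroup.toGroup.of hf, PresentedGroup.toGroup.of hf,
    fun _ => PresentedGroup.toGroup.of hf, fun _ => PresentedGroup.toGroup.of hf⟩
end

section
/- There is a group endomorphism φ of St_{G₂}(R) satisfying φ(S) = S′, φ(S′) = S, φ(X(t)) = X′(t³) and φ(X′(t)) = X(t) for all t ∈ R. -/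
/-! The exceptional diagram endomorphism of the Steinberg group of type `G₂` in
characteristic `3`. -/

namespace PaperAmalgams

/-- Generators of the Steinberg group of type `G₂`: `S`, `S′` and the `X(t)`, `X′(t)`. -/
inductive G2Gen (R : Type*)
  | S : G2Gen R
  | S' : G2Gen R
  | X : R → G2Gen R
  | X' : R → G2Gen R

open scoped commutatorElement in
/-- The defining relators of `St_{G₂}(R)` (in its simplified form, valid when `3 = 0` in
`R`); see the statement context for the list of relations. -/
def g2Rels (R : Type*) [CommRing R] : Set (FreeGroup (G2Gen R)) :=
  let S : FreeGroup (G2Gen R) := .of .S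
  let S' : FreeGroup (G2Gen R) := .of .S'
  let X : R → FreeGroup (G2Gen R) := fun t => .of (.X t)
  let X' : R → FreeGroup (G2Gen R) := fun t => .of (.X' t)
  {S * S' * S * S' * S * S' * (S' * S * S' * S * S' * S)⁻¹,
   S ^ 2 * S' * (S ^ 2)⁻¹ * S',
   S' ^ 2 * S * (S' ^ 2)⁻¹ * S,
   S * (X 1 * S * X 1 * S⁻¹ * X 1)⁻¹,
   S' * (X' 1 * S' * X' 1 * S'⁻¹ * X' 1)⁻¹} ∪
  (⋃ (t : R),
    {⁅S ^ 2, X t⁆,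
     ⁅S' ^ 2, X' t⁆,
     S ^ 2 * X' t * (S ^ 2)⁻¹ * (X' (-t))⁻¹,
     S' ^ 2 * X t * (S' ^ 2)⁻¹ * (X (-t))⁻¹,
     ⁅S * S' * S * S' * S, X' t⁆,
     ⁅S' * S * S' * S * S', X t⁆}) ∪
  (⋃ (t : R) (u : R),
    {X t * X u * (X (t + u))⁻¹,
     X' t * X' u * (X' (t + u))⁻¹,
     ⁅X' t, S' * S * X' u * S⁻¹ * S'⁻¹⁆,
     ⁅X t, S * S' * X u * S'⁻¹ * S⁻¹⁆,
     ⁅S * S' * X t * S'⁻¹ * S⁻¹, S' * S * X' u * S⁻¹ * S'⁻¹⁆,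
     ⁅S * X' t * S⁻¹, S' * X u * S'⁻¹⁆,
     (X' t * (S * X' u * S⁻¹) * (X' t)⁻¹ * (S * X' u * S⁻¹)⁻¹) *
       (S' * S * X' (t * u) * S⁻¹ * S'⁻¹)⁻¹,
     (X t * (S' * X u * S'⁻¹) * (X t)⁻¹ * (S' * X u * S'⁻¹)⁻¹) *
       (S * S' * X (t * u) * S'⁻¹ * S⁻¹)⁻¹,
     (X t * X' u * (X t)⁻¹ * (X' u)⁻¹) *
       ((S * S' * X (t ^ 2 * u) * S'⁻¹ * S⁻¹) *
        (S' * X (-(t * u)) * S'⁻¹) *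
        (S * X' (t ^ 3 * u) * S⁻¹) *
        (S' * S * X' (-(t ^ 3 * u ^ 2)) * S⁻¹ * S'⁻¹))⁻¹})

/-- The Steinberg group `St_{G₂}(R)` (presented form, for rings with `3 = 0`). -/
abbrev StG2 (R : Type*) [CommRing R] : Type _ := PresentedGroup (g2Rels R)

/-- The images of the generators in `St_{G₂}(R)`. -/
def StG2.gen {R : Type*} [CommRing R] (g : G2Gen R) : StG2 R := PresentedGroup.of g

end PaperAmalgams

/-! The substitution `S ↔ S′`, `X(t) ↦ X′(t³)`, `X′(t) ↦ X(t)` carries every defining relation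
of `St_{G₂}(R)` to another one (or to its inverse), up to the ring identities `(-t)³ = -t³`,
`(tu)³ = t³u³` and, using `3 = 0`, `(t + u)³ = t³ + u³`. The one relation needing more care is
the commutator formula for `[X(t), X′(u)]`: its image is the inverse of the formula for
`[X(u), X′(t³)]`, once `X(a)⁻¹ = X(-a)` is used to invert the conjugates on the right. -/

namespace PaperAmalgams

open scoped commutatorElement

variable {R : Type*} [CommRing R] {G : Type*} [Group G]

theorem add_pow_three_of_three_eq_zero (h3 : (3 : R) = 0) (a b : R) :
    (a + b) ^ 3 = a ^ 3 + b ^ 3 := by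
  linear_combination (a ^ 2 * b + a * b ^ 2) * h3

structure G2Relations (f : G2Gen R → G) : Prop where
  braid : f .S * f .S' * f .S * f .S' * f .S * f .S' = f .S' * f .S * f .S' * f .S * f .S' * f .S
  conj_sq_S_S' : f .S ^ 2 * f .S' * (f .S ^ 2)⁻¹ = (f .S')⁻¹
  conj_sq_S'_S : f .S' ^ 2 * f .S * (f .S' ^ 2)⁻¹ = (f .S)⁻¹
  S_eq : f .S = f (.X 1) * f .S * f (.X 1) * (f .S)⁻¹ * f (.X 1)
  S'_eq : f .S' = f (.X' 1) * f .S' * f (.X' 1) * (f .S')⁻¹ * f (.X' 1)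
  commute_sq_S_X (t : R) : Commute (f .S ^ 2) (f (.X t))
  commute_sq_S'_X' (t : R) : Commute (f .S' ^ 2) (f (.X' t))
  conj_sq_S_X' (t : R) : f .S ^ 2 * f (.X' t) * (f .S ^ 2)⁻¹ = f (.X' (-t))
  conj_sq_S'_X (t : R) : f .S' ^ 2 * f (.X t) * (f .S' ^ 2)⁻¹ = f (.X (-t))
  commute_SS'SS'S_X' (t : R) : Commute (f .S * f .S' * f .S * f .S' * f .S) (f (.X' t))
  commute_S'SS'SS'_X (t : R) : Commute (f .S' * f .S * f .S' * f .S * f .S') (f (.X t))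
  X_add (t u : R) : f (.X t) * f (.X u) = f (.X (t + u))
  X'_add (t u : R) : f (.X' t) * f (.X' u) = f (.X' (t + u))
  commute_X'_conj_X' (t u : R) :
    Commute (f (.X' t)) (f .S' * f .S * f (.X' u) * (f .S)⁻¹ * (f .S')⁻¹)
  commute_X_conj_X (t u : R) :
    Commute (f (.X t)) (f .S * f .S' * f (.X u) * (f .S')⁻¹ * (f .S)⁻¹)
  commute_conj_X_conj_X' (t u : R) :
    Commute (f .S * f .S' * f (.X t) * (f .S')⁻¹ * (f .S)⁻¹)
      (f .S' * f .S * f (.X' u) * (f .S)⁻¹ * (f .S')⁻¹)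
  commute_conj_X'_conj_X (t u : R) :
    Commute (f .S * f (.X' t) * (f .S)⁻¹) (f .S' * f (.X u) * (f .S')⁻¹)
  commutator_X'_conj_X' (t u : R) :
    ⁅f (.X' t), f .S * f (.X' u) * (f .S)⁻¹⁆ = f .S' * f .S * f (.X' (t * u)) * (f .S)⁻¹ * (f .S')⁻¹
  commutator_X_conj_X (t u : R) :
    ⁅f (.X t), f .S' * f (.X u) * (f .S')⁻¹⁆ = f .S * f .S' * f (.X (t * u)) * (f .S')⁻¹ * (f .S)⁻¹
  commutator_X_X' (t u : R) :
    ⁅f (.X t), f (.X' u)⁆ =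
      f .S * f .S' * f (.X (t ^ 2 * u)) * (f .S')⁻¹ * (f .S)⁻¹ *
        (f .S' * f (.X (-(t * u))) * (f .S')⁻¹) *
        (f .S * f (.X' (t ^ 3 * u)) * (f .S)⁻¹) *
        (f .S' * f .S * f (.X' (-(t ^ 3 * u ^ 2))) * (f .S)⁻¹ * (f .S')⁻¹)

theorem g2Relations_iff (f : G2Gen R → G) :
    G2Relations f ↔ ∀ r ∈ g2Rels R, FreeGroup.lift f r = 1 := by
  change _ ↔ g2Rels R ⊆ {r | FreeGroup.lift f r = 1}
  simp only [g2Rels, Set.union_subset_iff, Set.iUnion_subset_iff, Set.insert_subset_iff,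
    Set.singleton_subset_iff, Set.mem_ofPred_eq, forall_and, map_mul, map_inv, map_pow,
    map_commutatorElement, FreeGroup.lift_apply_of, mul_eq_one_iff_eq_inv, inv_inv, and_assoc,
    commutatorElement_eq_one_iff_commute, ← commutatorElement_def]
  constructor <;>
    rintro ⟨h₁, h₂, h₃, h₄, h₅, h₆, h₇, h₈, h₉, h₁₀, h₁₁, h₁₂, h₁₃, h₁₄, h₁₅, h₁₆, h₁₇, h₁₈, h₁₉, h₂₀⟩ <;>
    exact ⟨h₁, h₂, h₃, h₄, h₅, h₆, h₇, h₈, h₉, h₁₀, h₁₁, h₁₂, h₁₃, h₁₄, h₁₅, h₁₆, h₁₇, h₁₈, h₁₉, h₂₀⟩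

def diagramSwap : G2Gen R → G2Gen R
  | .S => .S'
  | .S' => .S
  | .X t => .X' (t ^ 3)
  | .X' t => .X t

namespace G2Relations

variable {f : G2Gen R → G}

theorem X_neg (h : G2Relations f) (t : R) : f (.X (-t)) = (f (.X t))⁻¹ := by
  have h₀ : f (.X 0) = 1 := mul_eq_left.mp ((h.X_add 0 0).trans (by rw [add_zero]))
  exact eq_inv_of_mul_eq_one_left (by rw [h.X_add, neg_add_cancel, h₀])

theorem X'_neg (h : G2Relations f) (t : R) : f (.X' (-t)) = (f (.X' t))⁻¹ := by
  have h₀ : f (.X' 0) = 1 := mul_eq_left.mp ((h.X'_add 0 0).trans (by rw [add_zero]))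
  exact eq_inv_of_mul_eq_one_left (by rw [h.X'_add, neg_add_cancel, h₀])

theorem comp_diagramSwap (h3 : (3 : R) = 0) (h : G2Relations f) :
    G2Relations (f ∘ diagramSwap) where
  braid := h.braid.symm
  conj_sq_S_S' := h.conj_sq_S'_S
  conj_sq_S'_S := h.conj_sq_S_S'
  S_eq := by simpa only [Function.comp_apply, diagramSwap, one_pow] using h.S'_eq
  S'_eq := h.S_eq
  commute_sq_S_X t := h.commute_sq_S'_X' (t ^ 3)
  commute_sq_S'_X' := h.commute_sq_S_X
  conj_sq_S_X' := h.conj_sq_S'_X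
  conj_sq_S'_X t := by
    simpa only [Function.comp_apply, diagramSwap, Odd.neg_pow (by decide : Odd 3)]
      using h.conj_sq_S_X' (t ^ 3)
  commute_SS'SS'S_X' := h.commute_S'SS'SS'_X
  commute_S'SS'SS'_X t := h.commute_SS'SS'S_X' (t ^ 3)
  X_add t u := by
    simpa only [Function.comp_apply, diagramSwap, add_pow_three_of_three_eq_zero h3]
      using h.X'_add (t ^ 3) (u ^ 3)
  X'_add := h.X_add
  commute_X'_conj_X' := h.commute_X_conj_X
  commute_X_conj_X t u := h.commute_X'_conj_X' (t ^ 3) (u ^ 3)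
  commute_conj_X_conj_X' t u := (h.commute_conj_X_conj_X' u (t ^ 3)).symm
  commute_conj_X'_conj_X t u := (h.commute_conj_X'_conj_X (u ^ 3) t).symm
  commutator_X'_conj_X' := h.commutator_X_conj_X
  commutator_X_conj_X t u := by
    simpa only [Function.comp_apply, diagramSwap, mul_pow]
      using h.commutator_X'_conj_X' (t ^ 3) (u ^ 3)
  commutator_X_X' t u := by
    have key := congrArg (·⁻¹) (h.commutator_X_X' u (t ^ 3))
    simp only [commutatorElement_inv, mul_inv_rev, inv_inv, ← h.X_neg, ← h.X'_neg, neg_neg] at key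
    simp only [Function.comp_apply, diagramSwap]
    ring_nf at key ⊢
    simpa only [mul_assoc] using key

end G2Relations

theorem g2Relations_gen : G2Relations (StG2.gen (R := R)) := by
  refine (g2Relations_iff _).mpr fun r hr => ?_
  rw [FreeGroup.ext_hom (FreeGroup.lift StG2.gen) (PresentedGroup.mk _)
    fun _ => FreeGroup.lift_apply_of]
  exact PresentedGroup.one_of_mem hr

end PaperAmalgams

open PaperAmalgams in
/-- If `3 = 0` in the commutative ring `R`, then the map `S ↔ S′`,
`X′(t) ↦ X(t) ↦ X′(t³)` extends to an endomorphism `φ` of `St_{G₂}(R)`. -/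
theorem exists_g2_diagram_endomorphism (R : Type*) [CommRing R] (h3 : (3 : R) = 0) :
    ∃ φ : StG2 R →* StG2 R,
      φ (StG2.gen G2Gen.S) = StG2.gen G2Gen.S' ∧
      φ (StG2.gen G2Gen.S') = StG2.gen G2Gen.S ∧
      (∀ t : R, φ (StG2.gen (G2Gen.X t)) = StG2.gen (G2Gen.X' (t ^ 3))) ∧
      (∀ t : R, φ (StG2.gen (G2Gen.X' t)) = StG2.gen (G2Gen.X t)) := by
  have hφ := (g2Relations_iff _).mp (g2Relations_gen.comp_diagramSwap h3)
  exact ⟨PresentedGroup.toGroup hφ, PresentedGroup.toGroup.of hφ, PresentedGroup.toGroup.of hφ,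
    fun _ => PresentedGroup.toGroup.of hφ, fun _ => PresentedGroup.toGroup.of hφ⟩
end

section
/- There exists a finite set F ⊆ Rˣ × Rˣ such that every element 𝒫_{u,v} with u, v ∈ Rˣ lies in the normal closure in G of the finite set {𝒫_{u,v} : (u,v) ∈ F}. -/
/-! Finitely many of the torus relators `𝒫_{u,v}` normally generate all of them. -/

namespace PaperAmalgams

/-- Generators: `S` and the `X(t)`, `t ∈ R`. -/
inductive A1Gen (R : Type*)
  | S : A1Gen R
  | X : R → A1Gen R

variable {R : Type*} [CommRing R]

/-- The word `s̃(r) = X(r) ⬝ S X(r⁻¹) S⁻¹ ⬝ X(r)` in the free group. -/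
def sTilde (r : Rˣ) : FreeGroup (A1Gen R) :=
  .of (.X (r : R)) * .of .S * .of (.X ((r⁻¹ : Rˣ) : R)) * (FreeGroup.of .S)⁻¹ *
    .of (.X (r : R))

/-- The word `h̃(r) = s̃(r) s̃(1)⁻¹` in the free group. -/
def hTilde (r : Rˣ) : FreeGroup (A1Gen R) := sTilde r * (sTilde 1)⁻¹

/-- The defining relators of `G`: for each `r` in the chosen generating set `rs` of `Rˣ`
and each `t ∈ R`, the relators expressing
`h̃(r) X(t) h̃(r)⁻¹ = X(r² t)` and `h̃(r) ⬝ S X(t) S⁻¹ ⬝ h̃(r)⁻¹ = S X(r⁻² t) S⁻¹`. -/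
def torusRels (rs : Finset Rˣ) : Set (FreeGroup (A1Gen R)) :=
  ⋃ (r : Rˣ) (_ : r ∈ rs) (t : R),
    {hTilde r * .of (.X t) * (hTilde r)⁻¹ * (FreeGroup.of (.X ((r : R) ^ 2 * t)))⁻¹,
     hTilde r * (.of .S * .of (.X t) * (FreeGroup.of (A1Gen.S (R := R)))⁻¹) * (hTilde r)⁻¹ *
       (.of .S * .of (.X (((r⁻¹ : Rˣ) : R) ^ 2 * t)) * (FreeGroup.of (A1Gen.S (R := R)))⁻¹)⁻¹}

/-- The group `G`. -/
abbrev TorusGroup (rs : Finset Rˣ) : Type _ := PresentedGroup (torusRels rs)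

/-- The element `𝒫_{u,v} = h̃(u v) h̃(u)⁻¹ h̃(v)⁻¹ ∈ G`. -/
def P (rs : Finset Rˣ) (u v : Rˣ) : TorusGroup rs :=
  PresentedGroup.mk (torusRels rs) (hTilde (u * v) * (hTilde u)⁻¹ * (hTilde v)⁻¹)

end PaperAmalgams

/-!
Let `N` be the normal closure of the `𝒫_{a,b}` with `a, b` products of subsets of `rs`, and
write `h(u)` for the image of `h̃(u)` in `G ⧸ N`. The defining relations say that conjugation by
`h̃(r)` multiplies the argument of `s̃` by `r²`; together with `𝒫_{r,r} ∈ N` this gives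
`h(r² u) = h(r) h(u) h(r)`. Every unit is a product of squares of elements of `rs`, their
inverses, and one subset product, so all values of `h` lie in the subgroup generated by the
`h(r)`, which is abelian because the `h(a)` with `a` a subset product commute. Moving squares
out of the argument then shows that `h` is multiplicative, i.e. every `𝒫_{u,v}` lies in `N`.
-/

section MultiplicativityCriterion

variable {A : Type*} [CommGroup A]

theorem Finset.prod_mul_prod_eq_sq_prod_inter_mul_prod_symmDiff {ι M : Type*} [DecidableEq ι]
    [CommMonoid M] (f : ι → M) (s t : Finset ι) :
    (∏ i ∈ s, f i) * ∏ i ∈ t, f i = (∏ i ∈ s ∩ t, f i) ^ 2 * ∏ i ∈ symmDiff s t, f i := by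
  have hunion : symmDiff s t ∪ s ∩ t = s ∪ t := by simpa using symmDiff_sup_inf s t
  have hdisj : Disjoint (symmDiff s t) (s ∩ t) := by simpa using disjoint_symmDiff_inf s t
  rw [← prod_union_inter, ← hunion, prod_union hdisj, mul_assoc, ← sq, mul_comm]

theorem sq_prod_mem_closure_sq {S : Set A} {T : Finset A} (hT : ↑T ⊆ S) :
    (∏ t ∈ T, t) ^ 2 ∈ Subgroup.closure ((· ^ 2) '' S) := by
  rw [← Finset.prod_pow]
  exact Subgroup.prod_mem _ fun t ht => Subgroup.subset_closure ⟨t, hT ht, rfl⟩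

theorem exists_mem_closure_sq_mul_prod {S : Set A} (hS : Subgroup.closure S = ⊤) (u : A) :
    ∃ q ∈ Subgroup.closure ((· ^ 2) '' S), ∃ T : Finset A, ↑T ⊆ S ∧ u = q * ∏ t ∈ T, t := by
  classical
  induction (hS ▸ Subgroup.mem_top u : u ∈ Subgroup.closure S) using
    Subgroup.closure_induction with
  | mem x hx => exact ⟨1, one_mem _, {x}, by simpa using hx, by simp⟩
  | one => exact ⟨1, one_mem _, ∅, by simp, by simp⟩
  | mul x y _ _ hx hy =>
    obtain ⟨q, hq, T, hT, rfl⟩ := hx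
    obtain ⟨q', hq', T', hT', rfl⟩ := hy
    refine ⟨q * q' * (∏ t ∈ T ∩ T', t) ^ 2,
      mul_mem (mul_mem hq hq') (sq_prod_mem_closure_sq (by grind)), symmDiff T T', ?_, ?_⟩
    · grind [Finset.coe_symmDiff]
    · rw [mul_mul_mul_comm, Finset.prod_mul_prod_eq_sq_prod_inter_mul_prod_symmDiff]
      simp only [mul_assoc]
  | inv x _ hx =>
    obtain ⟨q, hq, T, hT, rfl⟩ := hx
    refine ⟨q⁻¹ * ((∏ t ∈ T, t) ^ 2)⁻¹, mul_mem (inv_mem hq) (inv_mem (sq_prod_mem_closure_sq hT)),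
      T, hT, ?_⟩
    rw [sq, mul_inv, mul_inv, mul_assoc, inv_mul_cancel_right]


variable {Γ : Type*} [Group Γ] {S : Set A} {h : A → Γ}

theorem map_one_of_map_prod_mul
    (hprod : ∀ T T' : Finset A, ↑T ⊆ S → ↑T' ⊆ S →
      h ((∏ t ∈ T, t) * ∏ t ∈ T', t) = h (∏ t ∈ T, t) * h (∏ t ∈ T', t)) :
    h 1 = 1 := by
  simpa using hprod ∅ ∅ (by simp) (by simp)

theorem commute_of_map_prod_mul
    (hprod : ∀ T T' : Finset A, ↑T ⊆ S → ↑T' ⊆ S →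
      h ((∏ t ∈ T, t) * ∏ t ∈ T', t) = h (∏ t ∈ T, t) * h (∏ t ∈ T', t))
    {r s : A} (hr : r ∈ S) (hs : s ∈ S) : Commute (h r) (h s) := by
  have hrs := hprod {r} {s} (by simpa using hr) (by simpa using hs)
  have hsr := hprod {s} {r} (by simpa using hs) (by simpa using hr)
  simp only [Finset.prod_singleton] at hrs hsr
  rw [Commute, SemiconjBy, ← hrs, ← hsr, mul_comm]

theorem map_prod_mem_closure_image
    (hprod : ∀ T T' : Finset A, ↑T ⊆ S → ↑T' ⊆ S →
      h ((∏ t ∈ T, t) * ∏ t ∈ T', t) = h (∏ t ∈ T, t) * h (∏ t ∈ T', t))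
    {T : Finset A} (hT : ↑T ⊆ S) : h (∏ t ∈ T, t) ∈ Subgroup.closure (h '' S) := by
  classical
  induction T using Finset.induction_on with
  | empty => rw [Finset.prod_empty, map_one_of_map_prod_mul hprod]; exact one_mem _
  | insert a T ha ih =>
    rw [Finset.coe_insert, Set.insert_subset_iff] at hT
    have := hprod {a} T (by simpa using hT.1) hT.2
    rw [Finset.prod_insert ha]
    simp only [Finset.prod_singleton] at this
    rw [this]
    exact mul_mem (Subgroup.subset_closure ⟨a, hT.1, rfl⟩) (ih hT.2)

theorem map_mul_mem_closure_image_of_mem_closure_sq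
    (hsq : ∀ r ∈ S, ∀ u, h (r ^ 2 * u) = h r * h u * h r)
    {q : A} (hq : q ∈ Subgroup.closure ((· ^ 2) '' S)) {u : A}
    (hu : h u ∈ Subgroup.closure (h '' S)) : h (q * u) ∈ Subgroup.closure (h '' S) := by
  induction hq using Subgroup.closure_induction'' generalizing u with
  | mem x hx =>
    obtain ⟨r, hr, rfl⟩ := hx
    rw [hsq r hr]
    have hr' := Subgroup.subset_closure (Set.mem_image_of_mem h hr)
    exact mul_mem (mul_mem hr' hu) hr'
  | inv_mem x hx =>
    obtain ⟨r, hr, rfl⟩ := hx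
    have hconj : h u = h r * h ((r ^ 2)⁻¹ * u) * h r := by
      rw [← hsq r hr, mul_inv_cancel_left]
    rw [show h ((r ^ 2)⁻¹ * u) = (h r)⁻¹ * h u * (h r)⁻¹ by rw [hconj]; group]
    have hr' := inv_mem (Subgroup.subset_closure (Set.mem_image_of_mem h hr))
    exact mul_mem (mul_mem hr' hu) hr'
  | one => rwa [one_mul]
  | mul x y _ _ hx hy => rw [mul_assoc]; exact hx (hy hu)

theorem commute_of_closure_eq_top (hS : Subgroup.closure S = ⊤)
    (hsq : ∀ r ∈ S, ∀ u, h (r ^ 2 * u) = h r * h u * h r)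
    (hprod : ∀ T T' : Finset A, ↑T ⊆ S → ↑T' ⊆ S →
      h ((∏ t ∈ T, t) * ∏ t ∈ T', t) = h (∏ t ∈ T, t) * h (∏ t ∈ T', t))
    (u v : A) : Commute (h u) (h v) := by
  have hmem (w : A) : h w ∈ Subgroup.closure (h '' S) := by
    obtain ⟨q, hq, T, hT, rfl⟩ := exists_mem_closure_sq_mul_prod hS w
    exact map_mul_mem_closure_image_of_mem_closure_sq hsq hq (map_prod_mem_closure_image hprod hT)
  have := Subgroup.isMulCommutative_closure (k := h '' S) <| by
    rintro _ ⟨r, hr, rfl⟩ _ ⟨s, hs, rfl⟩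
    exact commute_of_map_prod_mul hprod hr hs
  exact setLike_mul_comm (hmem u) (hmem v)

theorem map_mul_of_mem_closure_sq (hS : Subgroup.closure S = ⊤)
    (hsq : ∀ r ∈ S, ∀ u, h (r ^ 2 * u) = h r * h u * h r)
    (hprod : ∀ T T' : Finset A, ↑T ⊆ S → ↑T' ⊆ S →
      h ((∏ t ∈ T, t) * ∏ t ∈ T', t) = h (∏ t ∈ T, t) * h (∏ t ∈ T', t))
    {q : A} (hq : q ∈ Subgroup.closure ((· ^ 2) '' S)) (u : A) : h (q * u) = h q * h u := by
  have h1 := map_one_of_map_prod_mul hprod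
  induction hq using Subgroup.closure_induction generalizing u with
  | mem x hx =>
    obtain ⟨r, hr, rfl⟩ := hx
    have hsq1 := hsq r hr 1
    rw [mul_one, h1, mul_one] at hsq1
    rw [hsq r hr, hsq1, mul_assoc, (commute_of_closure_eq_top hS hsq hprod u r).eq, mul_assoc]
  | one => rw [one_mul, h1, one_mul]
  | mul x y _ _ hx hy => rw [mul_assoc, hx, hy, hx y, mul_assoc]
  | inv x _ hx =>
    have hxinv : h x⁻¹ = (h x)⁻¹ :=
      (inv_eq_of_mul_eq_one_right (by rw [← hx, mul_inv_cancel, h1])).symm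
    rw [hxinv, eq_inv_mul_iff_mul_eq, ← hx, mul_inv_cancel_left]

theorem map_mul_of_closure_eq_top (hS : Subgroup.closure S = ⊤)
    (hsq : ∀ r ∈ S, ∀ u, h (r ^ 2 * u) = h r * h u * h r)
    (hprod : ∀ T T' : Finset A, ↑T ⊆ S → ↑T' ⊆ S →
      h ((∏ t ∈ T, t) * ∏ t ∈ T', t) = h (∏ t ∈ T, t) * h (∏ t ∈ T', t))
    (u v : A) : h (u * v) = h u * h v := by
  obtain ⟨q, hq, T, hT, rfl⟩ := exists_mem_closure_sq_mul_prod hS u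
  obtain ⟨q', hq', T', hT', rfl⟩ := exists_mem_closure_sq_mul_prod hS v
  have hmul {q : A} (hq : q ∈ Subgroup.closure ((· ^ 2) '' S)) :=
    map_mul_of_mem_closure_sq hS hsq hprod hq
  calc h ((q * ∏ t ∈ T, t) * (q' * ∏ t ∈ T', t))
      = h q * (h q' * (h (∏ t ∈ T, t) * h (∏ t ∈ T', t))) := by
        rw [mul_mul_mul_comm, mul_assoc, hmul hq, hmul hq', hprod T T' hT hT']
    _ = h q * h (∏ t ∈ T, t) * (h q' * h (∏ t ∈ T', t)) := by
        rw [← mul_assoc (h q'), (commute_of_closure_eq_top hS hsq hprod q' _).eq]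
        simp only [mul_assoc]
    _ = h (q * ∏ t ∈ T, t) * h (q' * ∏ t ∈ T', t) := by rw [hmul hq, hmul hq']

end MultiplicativityCriterion

namespace PaperAmalgams

variable {R : Type*} [CommRing R] {rs : Finset Rˣ}

def hBar (rs : Finset Rˣ) (u : Rˣ) : TorusGroup rs :=
  PresentedGroup.mk (torusRels rs) (hTilde u)

theorem P_eq (u v : Rˣ) : P rs u v = hBar rs (u * v) * (hBar rs u)⁻¹ * (hBar rs v)⁻¹ := by
  simp only [P, hBar, map_mul, map_inv]

theorem conj_mk_X {r : Rˣ} (hr : r ∈ rs) (t : R) :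
    MulAut.conj (PresentedGroup.mk (torusRels rs) (hTilde r))
        (PresentedGroup.mk (torusRels rs) (.of (.X t))) =
      PresentedGroup.mk (torusRels rs) (.of (.X ((r : R) ^ 2 * t))) := by
  rw [MulAut.conj_apply, ← map_inv, ← map_mul, ← map_mul]
  exact PresentedGroup.mk_eq_mk_of_mul_inv_mem <|
    Set.mem_iUnion₂.2 ⟨r, hr, Set.mem_iUnion.2 ⟨t, Set.mem_insert _ _⟩⟩

theorem conj_mk_S_X_S_inv {r : Rˣ} (hr : r ∈ rs) (t : R) :
    MulAut.conj (PresentedGroup.mk (torusRels rs) (hTilde r))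
        (PresentedGroup.mk (torusRels rs) (.of .S * .of (.X t) * (.of .S)⁻¹)) =
      PresentedGroup.mk (torusRels rs)
        (.of .S * .of (.X (((r⁻¹ : Rˣ) : R) ^ 2 * t)) * (.of .S)⁻¹) := by
  rw [MulAut.conj_apply, ← map_inv, ← map_mul, ← map_mul]
  exact PresentedGroup.mk_eq_mk_of_mul_inv_mem <|
    Set.mem_iUnion₂.2 ⟨r, hr, Set.mem_iUnion.2 ⟨t, Set.mem_insert_of_mem _ rfl⟩⟩

theorem conj_mk_sTilde {r : Rˣ} (hr : r ∈ rs) (u : Rˣ) :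
    MulAut.conj (PresentedGroup.mk (torusRels rs) (hTilde r))
        (PresentedGroup.mk (torusRels rs) (sTilde u)) =
      PresentedGroup.mk (torusRels rs) (sTilde (r ^ 2 * u)) := by
  have hsplit (w : Rˣ) : sTilde w = .of (.X (w : R)) *
      (.of .S * .of (.X ((w⁻¹ : Rˣ) : R)) * (.of .S)⁻¹) * .of (.X (w : R)) := by
    simp only [sTilde, mul_assoc]
  rw [hsplit, hsplit, map_mul, map_mul, map_mul, map_mul, conj_mk_X hr, conj_mk_S_X_S_inv hr,
    mul_inv, ← inv_pow, Units.val_mul, Units.val_mul, Units.val_pow_eq_pow_val,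
    Units.val_pow_eq_pow_val]
  simp only [map_mul]

theorem conj_hBar {r : Rˣ} (hr : r ∈ rs) (u : Rˣ) :
    hBar rs r * hBar rs u * (hBar rs r)⁻¹ = hBar rs (r ^ 2 * u) * (hBar rs (r ^ 2))⁻¹ := by
  have hconj (w : Rˣ) : hBar rs r * PresentedGroup.mk (torusRels rs) (sTilde w) * (hBar rs r)⁻¹ =
      PresentedGroup.mk (torusRels rs) (sTilde (r ^ 2 * w)) :=
    conj_mk_sTilde hr w
  have hsplit (w : Rˣ) : hBar rs w = PresentedGroup.mk (torusRels rs) (sTilde w) *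
      (PresentedGroup.mk (torusRels rs) (sTilde 1))⁻¹ := by
    rw [hBar, hTilde, map_mul, map_inv]
  rw [hsplit u, hsplit (r ^ 2 * u), hsplit (r ^ 2), ← hconj u, ← mul_one (r ^ 2), ← hconj 1]
  group

theorem P_mem_iff (N : Subgroup (TorusGroup rs)) [N.Normal] (u v : Rˣ) :
    P rs u v ∈ N ↔ (hBar rs (u * v) : TorusGroup rs ⧸ N) = hBar rs v * hBar rs u := by
  rw [← QuotientGroup.eq_one_iff, P_eq, QuotientGroup.mk_mul, QuotientGroup.mk_mul,
    QuotientGroup.mk_inv, QuotientGroup.mk_inv, mul_inv_eq_one, mul_inv_eq_iff_eq_mul]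

theorem hBar_sq_mul (N : Subgroup (TorusGroup rs)) [N.Normal] {r : Rˣ} (hr : r ∈ rs)
    (hrr : P rs r r ∈ N) (u : Rˣ) :
    (hBar rs (r ^ 2 * u) : TorusGroup rs ⧸ N) = hBar rs r * hBar rs u * hBar rs r := by
  have hconj := congrArg (QuotientGroup.mk (s := N)) (conj_hBar hr u)
  rw [P_mem_iff, ← sq] at hrr
  simp only [QuotientGroup.mk_mul, QuotientGroup.mk_inv, hrr] at hconj
  rw [eq_comm, mul_inv_eq_iff_eq_mul] at hconj
  rw [hconj]
  group

end PaperAmalgams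

open PaperAmalgams in
theorem torus_relators_finitely_generated_general {R : Type*} [CommRing R] (rs : Finset Rˣ)
    (hgen : Subgroup.closure (rs : Set Rˣ) = ⊤) :
    ∃ F : Finset (Rˣ × Rˣ), ∀ u v : Rˣ,
      P rs u v ∈
        Subgroup.normalClosure ((fun p : Rˣ × Rˣ => P rs p.1 p.2) '' (F : Set (Rˣ × Rˣ))) := by
  classical
  set C : Finset Rˣ := rs.powerset.image fun T => ∏ t ∈ T, t
  refine ⟨C ×ˢ C, fun u v => ?_⟩
  set N := Subgroup.normalClosure ((fun p : Rˣ × Rˣ => P rs p.1 p.2) '' ↑(C ×ˢ C))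
  have hC {a b : Rˣ} (ha : a ∈ C) (hb : b ∈ C) :
      (hBar rs (a * b) : TorusGroup rs ⧸ N) = hBar rs b * hBar rs a :=
    (P_mem_iff N a b).1 (Subgroup.subset_normalClosure ⟨(a, b), by simp [ha, hb], rfl⟩)
  have hmem {T : Finset Rˣ} (hT : ↑T ⊆ (rs : Set Rˣ)) : ∏ t ∈ T, t ∈ C :=
    Finset.mem_image_of_mem _ (Finset.mem_powerset.2 (Finset.coe_subset.1 hT))
  have hsq (r : Rˣ) (hr : r ∈ (rs : Set Rˣ)) (w : Rˣ) := by
    have hrC : r ∈ C := by simpa using hmem (T := {r}) (by simpa using hr)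
    exact hBar_sq_mul N hr ((P_mem_iff N r r).2 (hC hrC hrC)) w
  have hprod (T T' : Finset Rˣ) (hT : ↑T ⊆ (rs : Set Rˣ)) (hT' : ↑T' ⊆ (rs : Set Rˣ)) :=
    mul_comm (∏ t ∈ T, t) (∏ t ∈ T', t) ▸ hC (hmem hT') (hmem hT)
  rw [P_mem_iff, mul_comm]
  exact map_mul_of_closure_eq_top (h := fun w => (hBar rs w : TorusGroup rs ⧸ N))
    hgen hsq hprod v u

open PaperAmalgams in
/-- If the unit group `Rˣ` of a commutative ring `R` is generated by the elements of a
finite set `rs` that is closed under inversion, then there is a finite set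
`F ⊆ Rˣ × Rˣ` such that every `𝒫_{u,v}` (`u, v ∈ Rˣ`) lies in the normal closure in `G`
of the finitely many `𝒫_{u,v}` with `(u, v) ∈ F`. -/
theorem torus_relators_finitely_generated {R : Type*} [CommRing R] (rs : Finset Rˣ)
    (hgen : Subgroup.closure (rs : Set Rˣ) = ⊤)
    (hinv : ∀ r ∈ rs, r⁻¹ ∈ rs) :
    ∃ F : Finset (Rˣ × Rˣ), ∀ u v : Rˣ,
      P rs u v ∈
        Subgroup.normalClosure ((fun p : Rˣ × Rˣ => P rs p.1 p.2) '' (F : Set (Rˣ × Rˣ))) :=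
  torus_relators_finitely_generated_general rs hgen
end

section
/- If R is finitely generated as a commutative ring (i.e. R is a finitely generated ℤ-algebra), then the group St_{A₂}(R) is finitely generated. -/
/-! Conjugation by `S S′` carries `X(t)` to `X′(t)`, and the commutator relation
`[X(t), X′(u)] = S X′(t u) S⁻¹` then shows that, in a subgroup containing `S`, `S′` and `X(1)`,
the parameters `t` with `X(t)` in the subgroup form a subring of `R`. Hence `S`, `S′`, `X(1)`
and the `X(g)`, for `g` in a finite set generating `R` as a ring, generate `St_{A₂}(R)`. -/

namespace PaperAmalgams

open scoped commutatorElement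

/-- Generators of the Steinberg group of type `A₂`: `S`, `S′` and the `X(t)`, `X′(t)`. -/
inductive A2Gen (R : Type*)
  | S : A2Gen R
  | S' : A2Gen R
  | X : R → A2Gen R
  | X' : R → A2Gen R

/-- The defining relators of `St_{A₂}(R)`: for all `t, u ∈ R`,
`S S′ S = S′ S S′`; `S² S′ S⁻² = S′⁻¹` (& primed); `X(t) X(u) = X(t+u)` (& primed);
`S² ⇄ X(t)` (& primed); `S² X′(t) S⁻² = X′(−t)` (& primed);
`S S′ X(t) = X′(t) S S′` (& primed); `[X(t), X′(u)] = S X′(t u) S⁻¹` (& primed);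
`X(t) ⇄ S X′(u) S⁻¹` (& primed); `S = X(1) S X(1) S⁻¹ X(1)` (& primed). -/
def a2Rels (R : Type*) [CommRing R] : Set (FreeGroup (A2Gen R)) :=
  let S : FreeGroup (A2Gen R) := .of .S
  let S' : FreeGroup (A2Gen R) := .of .S'
  let X : R → FreeGroup (A2Gen R) := fun t => .of (.X t)
  let X' : R → FreeGroup (A2Gen R) := fun t => .of (.X' t)
  {S * S' * S * (S' * S * S')⁻¹,
   S ^ 2 * S' * (S ^ 2)⁻¹ * S',
   S' ^ 2 * S * (S' ^ 2)⁻¹ * S,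
   S * (X 1 * S * X 1 * S⁻¹ * X 1)⁻¹,
   S' * (X' 1 * S' * X' 1 * S'⁻¹ * X' 1)⁻¹} ∪
  (⋃ (t : R),
    {⁅S ^ 2, X t⁆,
     ⁅S' ^ 2, X' t⁆,
     S ^ 2 * X' t * (S ^ 2)⁻¹ * (X' (-t))⁻¹,
     S' ^ 2 * X t * (S' ^ 2)⁻¹ * (X (-t))⁻¹,
     S * S' * X t * (X' t * S * S')⁻¹,
     S' * S * X' t * (X t * S' * S)⁻¹}) ∪
  (⋃ (t : R) (u : R),
    {X t * X u * (X (t + u))⁻¹,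
     X' t * X' u * (X' (t + u))⁻¹,
     (X t * X' u * (X t)⁻¹ * (X' u)⁻¹) * (S * X' (t * u) * S⁻¹)⁻¹,
     (X' t * X u * (X' t)⁻¹ * (X u)⁻¹) * (S' * X (t * u) * S'⁻¹)⁻¹,
     ⁅X t, S * X' u * S⁻¹⁆,
     ⁅X' t, S' * X u * S'⁻¹⁆})

/-- The Steinberg group `St_{A₂}(R)`. -/
abbrev StA2 (R : Type*) [CommRing R] : Type _ := PresentedGroup (a2Rels R)

end PaperAmalgams

namespace PaperAmalgams.StA2

open PresentedGroup
open scoped commutatorElement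

variable {R : Type*} [CommRing R]

variable (R) in
def S : StA2 R := of A2Gen.S

variable (R) in
def S' : StA2 R := of A2Gen.S'

def X (t : R) : StA2 R := of (A2Gen.X t)

def X' (t : R) : StA2 R := of (A2Gen.X' t)

theorem X_add (t u : R) : X t * X u = X (t + u) :=
  mk_eq_mk_of_mul_inv_mem (Set.mem_union_right _ (Set.mem_iUnion₂.2 ⟨t, u, by simp⟩))

theorem X'_eq_conj (t : R) : X' t = S R * S' R * X t * (S R * S' R)⁻¹ := by
  have h : S R * S' R * X t = X' t * S R * S' R :=
    mk_eq_mk_of_mul_inv_mem (Set.mem_union_left _ (Set.mem_union_right _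
      (Set.mem_iUnion.2 ⟨t, by simp⟩)))
  rw [h]; group

theorem X_eq_conj (t : R) : X t = S' R * S R * X' t * (S' R * S R)⁻¹ := by
  have h : S' R * S R * X' t = X t * S' R * S R :=
    mk_eq_mk_of_mul_inv_mem (Set.mem_union_left _ (Set.mem_union_right _
      (Set.mem_iUnion.2 ⟨t, by simp⟩)))
  rw [h]; group

theorem commutatorElement_X_X' (t u : R) : ⁅X t, X' u⁆ = S R * X' (t * u) * (S R)⁻¹ :=
  mk_eq_mk_of_mul_inv_mem (Set.mem_union_right _ (Set.mem_iUnion₂.2 ⟨t, u, by simp⟩))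

theorem X_zero : X (0 : R) = 1 := by
  simpa using X_add (0 : R) 0

theorem X_neg (t : R) : X (-t) = (X t)⁻¹ :=
  eq_inv_of_mul_eq_one_right (by rw [X_add, add_neg_cancel, X_zero])

section Subgroup

variable {H : Subgroup (StA2 R)} (hS : S R ∈ H) (hS' : S' R ∈ H)
include hS hS'

theorem X'_mem_iff {t : R} : X' t ∈ H ↔ X t ∈ H := by
  have hSS' := mul_mem hS hS'
  have hS'S := mul_mem hS' hS
  constructor
  · intro h; rw [X_eq_conj]; exact mul_mem (mul_mem hS'S h) (inv_mem hS'S)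
  · intro h; rw [X'_eq_conj]; exact mul_mem (mul_mem hSS' h) (inv_mem hSS')

theorem X_mul_mem {t u : R} (ht : X t ∈ H) (hu : X u ∈ H) : X (t * u) ∈ H := by
  have hu' : X' u ∈ H := (X'_mem_iff hS hS').2 hu
  have key : X' (t * u) = (S R)⁻¹ * (X t * X' u * (X t)⁻¹ * (X' u)⁻¹) * S R := by
    rw [← commutatorElement_def, commutatorElement_X_X']; group
  rw [← X'_mem_iff hS hS', key]
  exact mul_mem (mul_mem (inv_mem hS)
    (mul_mem (mul_mem (mul_mem ht hu') (inv_mem ht)) (inv_mem hu'))) hS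

variable (H) in
def rootSubring (h1 : X 1 ∈ H) : Subring R where
  carrier := {t | X t ∈ H}
  one_mem' := h1
  zero_mem' := show X 0 ∈ H from X_zero (R := R) ▸ one_mem H
  add_mem' {t u} ht hu := show X (t + u) ∈ H from X_add t u ▸ mul_mem ht hu
  neg_mem' {t} ht := show X (-t) ∈ H from X_neg t ▸ inv_mem ht
  mul_mem' := X_mul_mem hS hS'

end Subgroup

theorem closure_S_S'_X_eq_top {σ : Set R} (hσ : Subring.closure σ = ⊤) :
    Subgroup.closure ({S R, S' R, X 1} ∪ X '' σ) = ⊤ := by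
  set H := Subgroup.closure ({S R, S' R, X 1} ∪ X '' σ)
  have hS : S R ∈ H := Subgroup.subset_closure (by simp)
  have hS' : S' R ∈ H := Subgroup.subset_closure (by simp)
  have hX : ∀ t, X t ∈ H := by
    have h1 : X 1 ∈ H := Subgroup.subset_closure (by simp)
    have hσH : Subring.closure σ ≤ rootSubring H hS hS' h1 :=
      Subring.closure_le.2 fun t ht => Subgroup.subset_closure (Or.inr ⟨t, ht, rfl⟩)
    exact fun t => hσH (hσ ▸ Subring.mem_top t)
  refine eq_top_iff.2 fun g _ => generated_by _ H (fun j => ?_) g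
  cases j with
  | S => exact hS
  | S' => exact hS'
  | X t => exact hX t
  | X' t => exact (X'_mem_iff hS hS').2 (hX t)

end PaperAmalgams.StA2

open PaperAmalgams in
/-- If `R` is a finitely generated commutative ring (finitely generated as a
`ℤ`-algebra), then `St_{A₂}(R)` is finitely generated. -/
theorem stA2_fg_of_finiteType {R : Type*} [CommRing R] [Algebra.FiniteType ℤ R] :
    Group.FG (StA2 R) := by
  obtain ⟨σ, hσ⟩ := ‹Algebra.FiniteType ℤ R›.out
  have hσ' : Subring.closure (σ : Set R) = ⊤ :=
    Algebra.toSubring_eq_top.2 (Algebra.adjoin_int (σ : Set R) ▸ hσ)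
  exact Group.fg_iff.2 ⟨_, StA2.closure_S_S'_X_eq_top hσ',
    (Set.toFinite _).union (σ.finite_toSet.image StA2.X)⟩
end

section
/- Suppose in addition that there is no ring homomorphism from R to ℤ/2ℤ (equivalently, 𝔽₂ is not a quotient ring of R). Then the subgroup of GL₄(R) generated by the two families {x_s(t) : t ∈ R} and {x_l(t) : t ∈ R} alone equals the subgroup generated by all four families {x_s(t), x_l(t), x_{s′}(t), x_{l′}(t) : t ∈ R}. -/
/-! Generators for the positive unipotent subgroup of `Sp₄`: the `B₂` case of the lemma
on generators of unipotent groups in rank 2. -/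

namespace PaperAmalgams

variable {R : Type*} [CommRing R]

/-- 4×4 matrices over `R`. -/
abbrev M4 (R : Type*) [CommRing R] := Matrix (Fin 4) (Fin 4) R

/-- The matrix unit `E i j`. -/
def E (i j : Fin 4) : M4 R := Matrix.single i j 1

/-- The invertible unipotent matrix `1 + t N`, for `N` with `N² = 0`. -/
def unip (N : M4 R) (hN : N * N = 0) (t : R) : GL (Fin 4) R :=
  ⟨1 + t • N, 1 - t • N, by noncomm_ring; simp [hN], by noncomm_ring; simp [hN]⟩

/-- The short simple root group element `x_s(t) = 1 + t(E₁₂ − E₃₄)`. -/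
def xs (t : R) : GL (Fin 4) R :=
  unip (E 0 1 - E 2 3)
    (by simp [E, sub_mul, mul_sub, Matrix.single_mul_single_of_ne]) t

/-- The long simple root group element `x_l(t) = 1 + t E₂₃`. -/
def xl (t : R) : GL (Fin 4) R :=
  unip (E 1 2) (by simp [E, Matrix.single_mul_single_of_ne]) t

/-- The other positive short root group element `x_{s′}(t) = 1 + t(E₁₃ + E₂₄)`. -/
def xs' (t : R) : GL (Fin 4) R :=
  unip (E 0 2 + E 1 3)
    (by simp [E, add_mul, mul_add, Matrix.single_mul_single_of_ne]) t

/-- The other positive long root group element `x_{l′}(t) = 1 + t E₁₄`. -/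
def xl' (t : R) : GL (Fin 4) R :=
  unip (E 0 3) (by simp [E, Matrix.single_mul_single_of_ne]) t

end PaperAmalgams

/-! The commutator `⁅x_s(t), x_l(u)⁆ = x_{s′}(tu) x_{l′}(t²u)`, compared at `t` and at `1`,
puts `x_{l′}((t² − t)u)` in the subgroup generated by `x_s` and `x_l`. The elements `t² − t`
generate the unit ideal exactly when `R` has no quotient `𝔽₂` (note `2 = 2² − 2`), so all of
`x_{l′}` lies in that subgroup, and then so does `x_{s′}(u) = x_{s′}(u) x_{l′}(u) · x_{l′}(−u)`. -/

theorem nonempty_ringHom_zmod_two_of_forall_isIdempotentElem {K : Type*} [CommRing K] [IsDomain K]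
    (h : ∀ x : K, IsIdempotentElem x) : Nonempty (K →+* ZMod 2) := by
  have zero_or_one (x : K) : x = 0 ∨ x = 1 := IsIdempotentElem.iff_eq_zero_or_one.mp (h x)
  have two_eq_zero : (2 : K) = 0 := by
    rcases zero_or_one 2 with h2 | h2
    · exact h2
    · exact absurd (by linear_combination h2) (one_ne_zero (α := K))
  have : CharP K 2 := CharTwo.of_one_ne_zero_of_two_eq_zero one_ne_zero two_eq_zero
  have surj : Function.Surjective (ZMod.castHom (dvd_refl 2) K) := fun x => by
    rcases zero_or_one x with rfl | rfl
    exacts [⟨0, map_zero _⟩, ⟨1, map_one _⟩]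
  exact ⟨(RingEquiv.ofBijective _ ⟨ZMod.castHom_injective K, surj⟩).symm.toRingHom⟩

theorem Ideal.span_range_mul_self_sub_self_eq_top {R : Type*} [CommRing R]
    (h : IsEmpty (R →+* ZMod 2)) : Ideal.span (Set.range fun t : R => t * t - t) = ⊤ := by
  by_contra hI
  obtain ⟨m, hm, hIm⟩ := Ideal.exists_le_maximal _ hI
  have idem (x : R ⧸ m) : IsIdempotentElem x := by
    obtain ⟨t, rfl⟩ := Ideal.Quotient.mk_surjective x
    rw [IsIdempotentElem, ← map_mul, ← sub_eq_zero, ← map_sub, Ideal.Quotient.eq_zero_iff_mem]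
    exact hIm (Ideal.subset_span ⟨t, rfl⟩)
  obtain ⟨f⟩ := nonempty_ringHom_zmod_two_of_forall_isIdempotentElem idem
  exact h.elim (f.comp (Ideal.Quotient.mk m))

namespace PaperAmalgams

open scoped commutatorElement

variable {R : Type*} [CommRing R]

section OneParameter

variable (N : M4 R) (hN : N * N = 0)

theorem coe_unip (t : R) : (unip N hN t : M4 R) = 1 + t • N := rfl

theorem unip_zero : unip N hN 0 = 1 := by
  ext1
  simp [coe_unip]

theorem unip_add (a b : R) : unip N hN (a + b) = unip N hN a * unip N hN b := by
  ext1
  simp only [coe_unip, Units.val_mul, mul_add, add_mul, Matrix.smul_mul, Matrix.mul_smul,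
    hN, smul_zero, mul_one, one_mul, add_smul]
  abel

theorem unip_neg (a : R) : unip N hN (-a) = (unip N hN a)⁻¹ := by
  rw [eq_inv_iff_mul_eq_one, ← unip_add, neg_add_cancel, unip_zero]

theorem unip_mem_of_mem_span {H : Subgroup (GL (Fin 4) R)} {S : Set R}
    (hS : ∀ s ∈ S, ∀ r, unip N hN (s * r) ∈ H) {v : R} (hv : v ∈ Ideal.span S) :
    unip N hN v ∈ H := by
  suffices ∀ r, unip N hN (v * r) ∈ H by simpa using this 1
  induction hv using Submodule.span_induction with
  | mem s hs => exact hS s hs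
  | zero => simp [unip_zero]
  | add x y _ _ hx hy => intro r; rw [add_mul, unip_add]; exact mul_mem (hx r) (hy r)
  | smul c x _ hx => intro r; rw [smul_eq_mul, mul_comm c, mul_assoc]; exact hx (c * r)

end OneParameter

theorem xl'_add (a b : R) : xl' (a + b) = xl' a * xl' b := unip_add _ _ a b

theorem xl'_neg (a : R) : xl' (-a) = (xl' a)⁻¹ := unip_neg _ _ a

theorem commutatorElement_xs_xl (t u : R) :
    ⁅xs t, xl u⁆ = xs' (t * u) * xl' (t ^ 2 * u) := by
  ext i j
  simp only [commutatorElement_def, Units.val_mul, xs, xl, xs', xl', Units.inv_mk, unip]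
  fin_cases i <;> fin_cases j <;>
    simp [E, Matrix.mul_apply, Matrix.single, Matrix.one_apply, Fin.sum_univ_four] <;> ring

theorem inv_xs'_mul_xl'_mul_xs'_mul_xl' (a b : R) :
    (xs' a * xl' a)⁻¹ * (xs' a * xl' b) = xl' (b - a) := by
  rw [sub_eq_neg_add, xl'_add, xl'_neg]
  group

end PaperAmalgams

open PaperAmalgams in
/-- If `𝔽₂` is not a quotient of `R` (there is no ring homomorphism `R → ℤ/2ℤ`), then the
subgroup of `GL₄(R)` generated by the two families `x_s`, `x_l` alone equals the subgroup
generated by all four families `x_s`, `x_l`, `x_{s′}`, `x_{l′}`. -/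
theorem b2_unipotent_two_families_generate {R : Type*} [CommRing R]
    (h2 : IsEmpty (R →+* ZMod 2)) :
    Subgroup.closure (Set.range (xs (R := R)) ∪ Set.range xl) =
      Subgroup.closure
        (Set.range (xs (R := R)) ∪ Set.range xl ∪ Set.range xs' ∪ Set.range xl') := by
  set H := Subgroup.closure (Set.range (xs (R := R)) ∪ Set.range xl)
  refine le_antisymm (Subgroup.closure_mono fun x hx => Or.inl (Or.inl hx)) ?_
  have hxs (t : R) : xs t ∈ H := Subgroup.subset_closure (Or.inl ⟨t, rfl⟩)
  have hxl (t : R) : xl t ∈ H := Subgroup.subset_closure (Or.inr ⟨t, rfl⟩)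
  have hcomm (t u : R) : xs' (t * u) * xl' (t ^ 2 * u) ∈ H := by
    rw [← commutatorElement_xs_xl, commutatorElement_def]
    exact mul_mem (mul_mem (mul_mem (hxs t) (hxl u)) (inv_mem (hxs t))) (inv_mem (hxl u))
  have hdiag (u : R) : xs' u * xl' u ∈ H := by simpa using hcomm 1 u
  have hxl' (v : R) : xl' v ∈ H := by
    have hspan := Ideal.span_range_mul_self_sub_self_eq_top h2
    refine unip_mem_of_mem_span _ _ ?_ (hspan ▸ Submodule.mem_top)
    rintro _ ⟨t, rfl⟩ u
    change xl' ((t * t - t) * u) ∈ H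
    rw [show (t * t - t) * u = t ^ 2 * u - t * u by ring,
      ← inv_xs'_mul_xl'_mul_xs'_mul_xl']
    exact mul_mem (inv_mem (hdiag (t * u))) (hcomm t u)
  rw [Subgroup.closure_le]
  rintro x (((⟨t, rfl⟩ | ⟨t, rfl⟩) | ⟨t, rfl⟩) | ⟨t, rfl⟩)
  · exact hxs t
  · exact hxl t
  · simpa using mul_mem (hdiag t) (inv_mem (hxl' t))
  · exact hxl' t
end

section
/- Let R be a commutative ring such that there is no ring homomorphism from R to ℤ/2ℤ. Then the ideal of R generated by the element 2 together with all elements of the form t² − t (t ∈ R) is the unit ideal (all of R). -/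
/-!
If the ideal were proper, it would lie in a maximal ideal `m`, and `R ⧸ m` would be a field in
which every element is idempotent. In a domain the only idempotents are `0` and `1`, and
`2 = 2 ^ 2 - 2` vanishes, so `R ⧸ m ≅ 𝔽₂` and `R → R ⧸ m ≅ 𝔽₂` is a ring homomorphism.
-/

theorem two_eq_zero_of_forall_isIdempotentElem {R : Type*} [NonAssocRing R]
    (h : ∀ x : R, IsIdempotentElem x) : (2 : R) = 0 := by
  have h2 : (2 : R) + 2 = 2 + 0 := by rw [← two_mul, (h 2).eq, add_zero]
  exact add_left_cancel h2

noncomputable def zmodTwoRingEquivOfForallIsIdempotentElem {K : Type*} [Ring K] [IsDomain K]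
    (h : ∀ x : K, IsIdempotentElem x) : ZMod 2 ≃+* K :=
  haveI : CharP K 2 := CharTwo.of_one_ne_zero_of_two_eq_zero one_ne_zero
    (two_eq_zero_of_forall_isIdempotentElem h)
  RingEquiv.ofBijective (ZMod.castHom dvd_rfl K) ⟨(ZMod.castHom dvd_rfl K).injective, by
    intro x
    rcases IsIdempotentElem.iff_eq_zero_or_one.mp (h x) with rfl | rfl
    · exact ⟨0, map_zero _⟩
    · exact ⟨1, map_one _⟩⟩

theorem Ideal.Quotient.isIdempotentElem_of_forall_sq_sub_self_mem {R : Type*} [CommRing R]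
    {I : Ideal R} (h : ∀ t : R, t ^ 2 - t ∈ I) (x : R ⧸ I) : IsIdempotentElem x := by
  obtain ⟨t, rfl⟩ := Ideal.Quotient.mk_surjective x
  rw [IsIdempotentElem, ← sub_eq_zero, ← map_mul, ← map_sub, Ideal.Quotient.eq_zero_iff_mem]
  simpa [sq] using h t

/-- If there is no ring homomorphism `R → ℤ/2ℤ` (equivalently, `𝔽₂` is not a quotient of
`R`), then the ideal of `R` generated by `2` together with all elements `t² − t` is the
unit ideal. -/
theorem ideal_two_and_sq_sub_self_eq_top {R : Type*} [CommRing R]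
    (h2 : IsEmpty (R →+* ZMod 2)) :
    Ideal.span (insert (2 : R) {x : R | ∃ t : R, x = t ^ 2 - t}) = ⊤ := by
  by_contra hne
  obtain ⟨m, hm, hle⟩ := Ideal.exists_le_maximal _ hne
  have hsq (t : R) : t ^ 2 - t ∈ m := hle (Ideal.subset_span (Or.inr ⟨t, rfl⟩))
  have e := zmodTwoRingEquivOfForallIsIdempotentElem
    (Ideal.Quotient.isIdempotentElem_of_forall_sq_sub_self_mem hsq)
  exact h2.elim (e.symm.toRingHom.comp (Ideal.Quotient.mk m))
end

section
/- Let R be a commutative ring such that there is no ring homomorphism from R to ℤ/2ℤ and no ring homomorphism from R to ℤ/3ℤ. Then the ideal of R generated by the element 6 together with all elements of the form 2(t³ − t) + 3(t² − t) (t ∈ R) is the unit ideal (all of R). -/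
/-!
If the ideal were proper, it would lie in a maximal ideal `M`, and `K = R ⧸ M` would be a field
in which `6 = 0`, so of characteristic `2` or `3`. In characteristic `2` the relation
`2(t³ − t) + 3(t² − t) = 0` reads `t² = t`, in characteristic `3` it reads `t³ = t`; either way
every element of `K` is fixed by Frobenius, so `K` is its prime field and `R → K` is a ring
homomorphism onto `𝔽₂` or `𝔽₃`.
-/

theorem ZMod.castHom_bijective_of_forall_pow_eq_self {K : Type*} [Field K] (p : ℕ) [Fact p.Prime]
    [CharP K p] (h : ∀ x : K, x ^ p = x) : Function.Bijective (ZMod.castHom (dvd_refl p) K) := by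
  refine ⟨(ZMod.castHom (dvd_refl p) K).injective, fun x => ?_⟩
  have hx : x ∈ (⊥ : Subfield K) := (Subfield.mem_bot_iff_pow_eq_self K p).mpr (h x)
  rwa [← fieldRange_castHom_eq_bot p] at hx

theorem nonempty_ringHom_zmod_of_forall_pow_eq_self {K : Type*} [Field K] (p : ℕ) [Fact p.Prime]
    [CharP K p] (h : ∀ x : K, x ^ p = x) : Nonempty (K →+* ZMod p) :=
  ⟨(RingEquiv.ofBijective _ (ZMod.castHom_bijective_of_forall_pow_eq_self p h)).symm.toRingHom⟩

theorem ringChar_eq_two_or_three_of_six_eq_zero {K : Type*} [Field K] (h6 : (6 : K) = 0) :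
    ringChar K = 2 ∨ ringChar K = 3 := by
  have hdvd : ringChar K ∣ 2 * 3 := ringChar.dvd (by exact_mod_cast h6)
  have hp : (ringChar K).Prime := by
    refine (CharP.char_is_prime_or_zero K (ringChar K)).resolve_right fun h0 => ?_
    rw [h0] at hdvd
    norm_num at hdvd
  rcases (Nat.Prime.dvd_mul hp).mp hdvd with h | h
  · exact Or.inl ((Nat.prime_dvd_prime_iff_eq hp Nat.prime_two).mp h)
  · exact Or.inr ((Nat.prime_dvd_prime_iff_eq hp Nat.prime_three).mp h)

theorem sq_eq_self_of_cubic_relation {K : Type*} [CommRing K] [CharP K 2] {x : K}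
    (hx : 2 * (x ^ 3 - x) + 3 * (x ^ 2 - x) = 0) : x ^ 2 = x := by
  have h2 : (2 : K) = 0 := by exact_mod_cast CharP.cast_eq_zero K 2
  linear_combination hx - (x ^ 3 - x + x ^ 2 - x) * h2

theorem pow_three_eq_self_of_cubic_relation {K : Type*} [CommRing K] [CharP K 3] {x : K}
    (hx : 2 * (x ^ 3 - x) + 3 * (x ^ 2 - x) = 0) : x ^ 3 = x := by
  have h3 : (3 : K) = 0 := by exact_mod_cast CharP.cast_eq_zero K 3
  linear_combination (x ^ 3 - x + x ^ 2 - x) * h3 - hx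

/-- If there is no ring homomorphism `R → ℤ/2ℤ` and none `R → ℤ/3ℤ` (equivalently,
neither `𝔽₂` nor `𝔽₃` is a quotient of `R`), then the ideal of `R` generated by `6`
together with all elements `2(t³ − t) + 3(t² − t)` is the unit ideal. -/
theorem ideal_six_and_cubes_eq_top {R : Type*} [CommRing R]
    (h2 : IsEmpty (R →+* ZMod 2)) (h3 : IsEmpty (R →+* ZMod 3)) :
    Ideal.span
        (insert (6 : R) {x : R | ∃ t : R, x = 2 * (t ^ 3 - t) + 3 * (t ^ 2 - t)}) = ⊤ := by
  by_contra h
  obtain ⟨M, hM, hle⟩ := Ideal.exists_le_maximal _ h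
  let := Ideal.Quotient.field M
  have mk_eq_zero {r : R} (hr : r ∈ insert (6 : R)
      {x : R | ∃ t : R, x = 2 * (t ^ 3 - t) + 3 * (t ^ 2 - t)}) : Ideal.Quotient.mk M r = 0 :=
    Ideal.Quotient.eq_zero_iff_mem.mpr (hle (Ideal.subset_span hr))
  have h6 : (6 : R ⧸ M) = 0 := by
    simpa only [map_ofNat] using mk_eq_zero (Set.mem_insert _ _)
  have hrel (x : R ⧸ M) : 2 * (x ^ 3 - x) + 3 * (x ^ 2 - x) = 0 := by
    obtain ⟨t, rfl⟩ := Ideal.Quotient.mk_surjective x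
    simpa only [map_add, map_mul, map_sub, map_pow, map_ofNat] using
      mk_eq_zero (Set.mem_insert_of_mem _ ⟨t, rfl⟩)
  rcases ringChar_eq_two_or_three_of_six_eq_zero (K := R ⧸ M) h6 with hc | hc
  · have : CharP (R ⧸ M) 2 := ringChar.of_eq hc
    obtain ⟨f⟩ := nonempty_ringHom_zmod_of_forall_pow_eq_self 2
      fun x => sq_eq_self_of_cubic_relation (hrel x)
    exact h2.false (f.comp (Ideal.Quotient.mk M))
  · have : CharP (R ⧸ M) 3 := ringChar.of_eq hc
    obtain ⟨f⟩ := nonempty_ringHom_zmod_of_forall_pow_eq_self 3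
      fun x => pow_three_eq_self_of_cubic_relation (hrel x)
    exact h3.false (f.comp (Ideal.Quotient.mk M))
end
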